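/- arXiv:0804.0700 — 8 statements merged into one kernel-verified Lean document; each statement's English description precedes it below -/
import Mathlib

section
/- Let n ∈ ℕ and let E, A be n×n real matrices such that the pencil (E,A) is regular, i.e. the polynomial det(X·E − A) ∈ ℝ[X] is not the zero polynomial. Then there exist invertible real n×n matrices Q and P, natural numbers n₁, n₂ with n₁ + n₂ = n, a real n₁×n₁ matrix W and a nilpotent real n₂×n₂ matrix N such that Q·E·P equals the block-diagonal matrix diag(I_{n₁}, N) and Q·A·P equals the block-diagonal matrix diag(W, I_{n₂}). -/
open Matrix Polynomial

/-- The canonical identification of `Fin n` with `Fin n₁ ⊕ Fin n₂` when `n₁ + n₂ = n`. -/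
def blockEquiv {n₁ n₂ n : ℕ} (h : n₁ + n₂ = n) : Fin n ≃ (Fin n₁ ⊕ Fin n₂) :=
  (finCongr h.symm).trans finSumFinEquiv.symm

/-!
Since `det (X • E - A)` is a nonzero polynomial and `ℝ` is infinite, some `S = μ • E - A` is
invertible, and then `S⁻¹ * A = μ • M - 1` with `M = S⁻¹ * E`: it suffices to bring the pencil
`(M, μ • M - 1)` to canonical form. The Fitting decomposition `ker (M ^ k) ⊕ range (M ^ k)`
makes `M` similar to `diag (B, C)` with `B` invertible and `C` nilpotent. Multiplying on the left
by `diag (B⁻¹, (μ • C - 1)⁻¹)`, which exists because `μ • C` is nilpotent, turns `M` into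
`diag (1, (μ • C - 1)⁻¹ * C)` and `μ • M - 1` into `diag (B⁻¹ * (μ • B - 1), 1)`; the block
`(μ • C - 1)⁻¹ * C` is nilpotent since its two factors commute.
-/

open Function LinearMap

namespace Module.End

variable {R M : Type*} [Ring R] [AddCommGroup M] [Module R M] (f : Module.End R M)

lemma apply_mem_ker_pow (k : ℕ) : ∀ x ∈ ker (f ^ k), f x ∈ ker (f ^ k) := fun x hx ↦ by
  rw [mem_ker] at hx ⊢
  rw [← mul_apply, pow_mul_comm', mul_apply, hx, map_zero]

lemma apply_mem_range_pow (k : ℕ) : ∀ x ∈ range (f ^ k), f x ∈ range (f ^ k) := by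
  rintro _ ⟨y, rfl⟩
  exact ⟨f y, by rw [← mul_apply, pow_mul_comm', mul_apply]⟩

lemma isNilpotent_restrict_ker_pow (k : ℕ) :
    IsNilpotent (f.restrict (f.apply_mem_ker_pow k)) := by
  refine ⟨k, LinearMap.ext fun x ↦ Subtype.ext ?_⟩
  rw [pow_restrict, coe_restrict_apply]
  exact x.2

lemma bijective_restrict_range_pow [IsArtinian R M] {k : ℕ} (hk : k ≠ 0)
    (h : Disjoint (ker (f ^ k)) (range (f ^ k))) :
    Bijective (f.restrict (f.apply_mem_range_pow k)) := by
  refine IsArtinian.bijective_of_injective_endomorphism _ ?_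
  rw [← LinearMap.ker_eq_bot, Submodule.eq_bot_iff]
  rintro ⟨x, hx⟩ hfx
  have hfx : f x = 0 := congrArg Subtype.val hfx
  have hxker : x ∈ ker (f ^ k) :=
    pow_map_zero_of_le (Nat.one_le_iff_ne_zero.2 hk) (by simpa using hfx)
  exact Subtype.ext (Submodule.disjoint_def.mp h x hxker hx)

end Module.End

section BlockMatrix

variable {R M : Type*} [CommRing R] [AddCommGroup M] [Module R M]

lemma LinearMap.toMatrix_basis_reindex {ι κ : Type*} [Fintype ι] [Fintype κ] [DecidableEq ι]
    [DecidableEq κ] (b : Module.Basis ι R M) (e : ι ≃ κ) (f : M →ₗ[R] M) :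
    toMatrix (b.reindex e) (b.reindex e) f = reindex e e (toMatrix b b f) := by
  ext i j
  simp [LinearMap.toMatrix_apply]

lemma LinearMap.toMatrix_prodEquivOfIsCompl {p q : Submodule R M} (h : IsCompl p q)
    {ι₁ ι₂ : Type*} [Fintype ι₁] [Fintype ι₂] [DecidableEq ι₁] [DecidableEq ι₂]
    (b₁ : Module.Basis ι₁ R p) (b₂ : Module.Basis ι₂ R q) (f : M →ₗ[R] M)
    (hp : ∀ x ∈ p, f x ∈ p) (hq : ∀ x ∈ q, f x ∈ q) :
    toMatrix ((b₁.prod b₂).map (p.prodEquivOfIsCompl q h))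
        ((b₁.prod b₂).map (p.prodEquivOfIsCompl q h)) f
      = fromBlocks (toMatrix b₁ b₁ (f.restrict hp)) 0 0 (toMatrix b₂ b₂ (f.restrict hq)) := by
  rw [toMatrix_map_left, toMatrix_map_right, ← toMatrix_prodMap]
  congr 1
  refine LinearMap.ext fun x ↦ ?_
  rw [comp_apply, comp_apply, LinearEquiv.coe_coe, LinearEquiv.symm_apply_eq]
  simp [Submodule.coe_prodEquivOfIsCompl']

end BlockMatrix

lemma Matrix.exists_isUnit_inv_mul_mul_eq_toMatrix {R ι : Type*} [CommRing R] [Fintype ι]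
    [DecidableEq ι] (M : Matrix ι ι R) (c : Module.Basis ι R (ι → R)) :
    ∃ T : Matrix ι ι R, IsUnit T ∧ T⁻¹ * M * T = toMatrix c c (toLin' M) := by
  let std := Pi.basisFun R ι
  have hinv : (std.toMatrix c)⁻¹ = c.toMatrix std :=
    inv_eq_left_inv (Module.Basis.toMatrix_mul_toMatrix_flip _ _)
  have := std.invertibleToMatrix c
  refine ⟨std.toMatrix c, isUnit_of_invertible _, ?_⟩
  rw [hinv, ← basis_toMatrix_mul_linearMap_toMatrix_mul_basis_toMatrix (b' := std) (c' := std),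
    toMatrix_eq_toMatrix', toMatrix'_toLin']

theorem Matrix.exists_isUnit_conj_fromBlocks_isUnit_isNilpotent {K : Type*} [Field K] {n : ℕ}
    (M : Matrix (Fin n) (Fin n) K) :
    ∃ (n₁ n₂ : ℕ) (hn : n₁ + n₂ = n) (T : Matrix (Fin n) (Fin n) K)
      (B : Matrix (Fin n₁) (Fin n₁) K) (C : Matrix (Fin n₂) (Fin n₂) K),
      IsUnit T ∧ IsUnit B ∧ IsNilpotent C ∧
      reindex (blockEquiv hn) (blockEquiv hn) (T⁻¹ * M * T) = fromBlocks B 0 0 C := by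
  let f : Module.End K (Fin n → K) := toLin' M
  obtain ⟨k, hk, hcompl⟩ := ((Filter.eventually_ne_atTop 0).and
    f.eventually_isCompl_ker_pow_range_pow).exists
  have hn : Module.finrank K (range (f ^ k)) + Module.finrank K (ker (f ^ k)) = n := by
    rw [add_comm, Submodule.finrank_add_eq_of_isCompl hcompl, Module.finrank_fin_fun]
  let b₁ := Module.finBasis K (range (f ^ k))
  let b₂ := Module.finBasis K (ker (f ^ k))
  let b := (b₁.prod b₂).map ((range (f ^ k)).prodEquivOfIsCompl (ker (f ^ k)) hcompl.symm)
  obtain ⟨T, hT, hTM⟩ := M.exists_isUnit_inv_mul_mul_eq_toMatrix (b.reindex (blockEquiv hn).symm)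
  refine ⟨_, _, hn, T, toMatrix b₁ b₁ (f.restrict (f.apply_mem_range_pow k)),
    toMatrix b₂ b₂ (f.restrict (f.apply_mem_ker_pow k)), hT, ?_, ?_, ?_⟩
  · exact (isUnit_toMatrix_iff _).2 ((Module.End.isUnit_iff _).2
      (f.bijective_restrict_range_pow hk hcompl.disjoint))
  · exact (isNilpotent_toMatrix_iff _ _).2 (f.isNilpotent_restrict_ker_pow k)
  · rw [hTM, toMatrix_basis_reindex, ← reindex_symm, Equiv.apply_symm_apply]
    exact toMatrix_prodEquivOfIsCompl hcompl.symm b₁ b₂ f _ _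

theorem Matrix.exists_weierstrass_form_smul_sub_one {K : Type*} [Field K] {n : ℕ}
    (M : Matrix (Fin n) (Fin n) K) (μ : K) :
    ∃ (n₁ n₂ : ℕ) (hn : n₁ + n₂ = n) (Q P : Matrix (Fin n) (Fin n) K)
      (W : Matrix (Fin n₁) (Fin n₁) K) (N : Matrix (Fin n₂) (Fin n₂) K),
      IsUnit Q ∧ IsUnit P ∧ IsNilpotent N ∧
      reindex (blockEquiv hn) (blockEquiv hn) (Q * M * P) = fromBlocks 1 0 0 N ∧
      reindex (blockEquiv hn) (blockEquiv hn) (Q * (μ • M - 1) * P) = fromBlocks W 0 0 1 := by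
  obtain ⟨n₁, n₂, hn, T, B, C, hT, hB, hC, hTM⟩ :=
    M.exists_isUnit_conj_fromBlocks_isUnit_isNilpotent
  let e := reindexAlgEquiv K K (blockEquiv hn)
  have hU : IsUnit (μ • C - 1) := (hC.smul μ).isUnit_sub_one
  let D := fromBlocks B⁻¹ 0 0 (μ • C - 1)⁻¹
  have hD : IsUnit D :=
    isUnit_fromBlocks_zero₂₁.2 ⟨isUnit_nonsing_inv_iff.2 hB, isUnit_nonsing_inv_iff.2 hU⟩
  have hconj : ∀ X, e (e.symm D * T⁻¹ * X * T) = D * e (T⁻¹ * X * T) := fun X ↦ by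
    simp only [map_mul, AlgEquiv.apply_symm_apply, mul_assoc]
  have hTM' : e (T⁻¹ * M * T) = fromBlocks B 0 0 C := hTM
  have hTA : e (T⁻¹ * (μ • M - 1) * T) = fromBlocks (μ • B - 1) 0 0 (μ • C - 1) := by
    rw [mul_sub, sub_mul, mul_smul_comm, smul_mul_assoc, mul_one,
      nonsing_inv_mul _ ((isUnit_iff_isUnit_det T).1 hT), map_sub, map_smul, map_one, hTM']
    ext (i | i) (j | j) <;> simp [one_apply]
  have hUC : Commute (μ • C - 1)⁻¹ C := by
    simpa using ((Commute.refl C).smul_left μ |>.sub_left (Commute.one_left C)).units_inv_left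
      (u := hU.unit)
  refine ⟨n₁, n₂, hn, e.symm D * T⁻¹, T, B⁻¹ * (μ • B - 1), (μ • C - 1)⁻¹ * C,
    (hD.map e.symm).mul (isUnit_nonsing_inv_iff.2 hT), hT, hUC.isNilpotent_mul_left hC, ?_, ?_⟩
  · change e _ = _
    rw [hconj, hTM', fromBlocks_multiply]
    simp [nonsing_inv_mul _ ((isUnit_iff_isUnit_det B).1 hB)]
  · change e _ = _
    rw [hconj, hTA, fromBlocks_multiply]
    simp [nonsing_inv_mul _ ((isUnit_iff_isUnit_det _).1 hU)]

lemma Matrix.eval_det_X_smul_sub {R ι : Type*} [CommRing R] [Fintype ι] [DecidableEq ι]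
    (E A : Matrix ι ι R) (μ : R) :
    (det ((X : R[X]) • E.map C - A.map C)).eval μ = det (μ • E - A) := by
  rw [← coe_evalRingHom, RingHom.map_det]
  congr 1
  ext i j
  simp only [RingHom.mapMatrix_apply, map_apply, sub_apply, smul_apply, smul_eq_mul,
    coe_evalRingHom, eval_sub, eval_mul, eval_X, eval_C]

lemma Matrix.exists_isUnit_smul_sub_of_det_ne_zero {K ι : Type*} [Field K] [Infinite K]
    [Fintype ι] [DecidableEq ι] {E A : Matrix ι ι K}
    (hreg : det ((X : K[X]) • E.map C - A.map C) ≠ 0) :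
    ∃ μ : K, IsUnit (μ • E - A) := by
  obtain ⟨μ, hμ⟩ : ∃ μ, (det ((X : K[X]) • E.map C - A.map C)).eval μ ≠ 0 := by
    by_contra! h
    exact hreg (zero_of_eval_zero _ h)
  rw [eval_det_X_smul_sub] at hμ
  exact ⟨μ, (isUnit_iff_isUnit_det _).2 hμ.isUnit⟩

/-- Existence of the Weierstrass canonical form for a regular pencil `(E, A)`. -/
theorem weierstrass_canonical_form_exists (n : ℕ) (E A : Matrix (Fin n) (Fin n) ℝ)
    (hreg : Matrix.det ((Polynomial.X : Polynomial ℝ) • E.map Polynomial.C - A.map Polynomial.C) ≠ 0) :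
    ∃ (n₁ n₂ : ℕ) (hn : n₁ + n₂ = n) (Q P : Matrix (Fin n) (Fin n) ℝ)
      (W : Matrix (Fin n₁) (Fin n₁) ℝ) (N : Matrix (Fin n₂) (Fin n₂) ℝ),
      IsUnit Q ∧ IsUnit P ∧ IsNilpotent N ∧
      Matrix.reindex (blockEquiv hn) (blockEquiv hn) (Q * E * P)
        = Matrix.fromBlocks 1 0 0 N ∧
      Matrix.reindex (blockEquiv hn) (blockEquiv hn) (Q * A * P)
        = Matrix.fromBlocks W 0 0 1 := by
  obtain ⟨μ, hS⟩ := exists_isUnit_smul_sub_of_det_ne_zero hreg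
  set S := μ • E - A
  have hA : S⁻¹ * A = μ • (S⁻¹ * E) - 1 := by
    rw [← mul_smul_comm, ← nonsing_inv_mul S ((isUnit_iff_isUnit_det S).1 hS), ← mul_sub,
      sub_sub_cancel]
  obtain ⟨n₁, n₂, hn, Q, P, W, N, hQ, hP, hN, hE', hA'⟩ :=
    (S⁻¹ * E).exists_weierstrass_form_smul_sub_one μ
  refine ⟨n₁, n₂, hn, Q * S⁻¹, P, W, N, hQ.mul (isUnit_nonsing_inv_iff.2 hS), hP, hN, ?_, ?_⟩
  · rw [mul_assoc Q]
    exact hE'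
  · rw [mul_assoc Q, hA]
    exact hA'
end

section
/- Let N be a real n₂×n₂ nilpotent matrix with N^ℓ = 0 for some ℓ ≥ 1, and let f : ℝ → ℝ^{n₂} be infinitely differentiable. Then the function z₂(t) := −Σ_{i=0}^{ℓ−1} Nⁱ·f⁽ⁱ⁾(t) is differentiable and satisfies N·ż₂(t) = z₂(t) + f(t) for all t; moreover, any ℓ-times differentiable function w : ℝ → ℝ^{n₂} satisfying N·ẇ(t) = w(t) + f(t) for all t equals z₂. -/
open Matrix ContDiff

/-- mulVec commutes with iteratedDeriv for sufficiently smooth functions. -/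
lemma mulVec_iteratedDeriv_comm {n : ℕ} (m : Matrix (Fin n) (Fin n) ℝ)
    {g : ℝ → Fin n → ℝ} {K : WithTop ℕ∞} (hg : ContDiff ℝ K g) {k : ℕ} (hk : (k : WithTop ℕ∞) ≤ K)
    (t : ℝ) :
    iteratedDeriv k (fun s => m.mulVec (g s)) t = m.mulVec (iteratedDeriv k g t) := by
  let L := LinearMap.toContinuousLinearMap m.mulVecLin
  have h1 : (fun s => m.mulVec (g s)) = L ∘ g := rfl
  rw [h1, iteratedDeriv_eq_iteratedFDeriv, L.iteratedFDeriv_comp_left (x := t) hg.contDiffAt hk,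
    iteratedDeriv_eq_iteratedFDeriv]
  rfl

/-- mulVec commutes with deriv for differentiable functions. -/
lemma mulVec_deriv_comm {n : ℕ} (m : Matrix (Fin n) (Fin n) ℝ)
    {g : ℝ → Fin n → ℝ} (hg : Differentiable ℝ g) (t : ℝ) :
    deriv (fun s => m.mulVec (g s)) t = m.mulVec (deriv g t) := by
  let L := LinearMap.toContinuousLinearMap m.mulVecLin
  have h1 : (fun s => m.mulVec (g s)) = L ∘ g := rfl
  rw [h1]
  exact (L.hasFDerivAt.comp_hasDerivAt t (hg t).hasDerivAt).deriv

/-- Explicit solution and uniqueness for the fast (nilpotent) subsystem of the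
Weierstrass canonical form (Lemma 1, equation (3.b)). -/
theorem fast_subsystem_solution
    (n₂ : ℕ) (N : Matrix (Fin n₂) (Fin n₂) ℝ) (ℓ : ℕ) (hℓ : 1 ≤ ℓ) (hN : N ^ ℓ = 0)
    (f : ℝ → Fin n₂ → ℝ) (hf : ContDiff ℝ (⊤ : ℕ∞) f)
    (z₂ : ℝ → Fin n₂ → ℝ)
    (hz₂ : ∀ t, z₂ t = -∑ i ∈ Finset.range ℓ, (N ^ i).mulVec (iteratedDeriv i f t)) :
    (Differentiable ℝ z₂) ∧
    (∀ t : ℝ, N.mulVec (deriv z₂ t) = z₂ t + f t) ∧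
    (∀ w : ℝ → Fin n₂ → ℝ, ContDiff ℝ (ℓ : ℕ∞) w →
      (∀ t : ℝ, N.mulVec (deriv w t) = w t + f t) → w = z₂) := by
  obtain ⟨m, rfl⟩ : ∃ m, ℓ = m + 1 := ⟨ℓ - 1, (Nat.succ_pred_eq_of_pos hℓ).symm⟩
  have hf' : ContDiff ℝ (∞ : WithTop ℕ∞) f := hf.of_le (by simp)
  have hfi : ∀ i : ℕ, ContDiff ℝ (∞ : WithTop ℕ∞) (iteratedDeriv i f) := by
    intro i
    rw [iteratedDeriv_eq_iterate]
    exact hf'.iterate_deriv i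
  have hone : (1 : WithTop ℕ∞) ≤ ∞ := by exact_mod_cast le_top
  -- derivative of each summand
  have hFd : ∀ (i : ℕ) (t : ℝ),
      HasDerivAt (fun s => (N ^ i).mulVec (iteratedDeriv i f s))
        ((N ^ i).mulVec (iteratedDeriv (i + 1) f t)) t := by
    intro i t
    have hg : HasDerivAt (iteratedDeriv i f) (iteratedDeriv (i + 1) f t) t := by
      have := (((hfi i).differentiable (one_pos.trans_le hone).ne') t).hasDerivAt
      rwa [iteratedDeriv_succ]
    have hL := (LinearMap.toContinuousLinearMap (N ^ i).mulVecLin).hasFDerivAt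
      (x := iteratedDeriv i f t)
    exact hL.comp_hasDerivAt t hg
  have hz₂d : ∀ t, HasDerivAt z₂
      (-∑ i ∈ Finset.range (m + 1), (N ^ i).mulVec (iteratedDeriv (i + 1) f t)) t := by
    intro t
    have hs : HasDerivAt (fun s => ∑ i ∈ Finset.range (m + 1),
        (N ^ i).mulVec (iteratedDeriv i f s))
        (∑ i ∈ Finset.range (m + 1), (N ^ i).mulVec (iteratedDeriv (i + 1) f t)) t :=
      HasDerivAt.fun_sum fun i _ => hFd i t
    have hzz : z₂ = fun s => -∑ i ∈ Finset.range (m + 1),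
        (N ^ i).mulVec (iteratedDeriv i f s) := funext hz₂
    rw [hzz]
    exact hs.neg
  have hdiff : Differentiable ℝ z₂ := fun t => (hz₂d t).differentiableAt
  refine ⟨hdiff, ?_, ?_⟩
  · intro t
    have hderiv : deriv z₂ t =
        -∑ i ∈ Finset.range (m + 1), (N ^ i).mulVec (iteratedDeriv (i + 1) f t) :=
      (hz₂d t).deriv
    rw [hderiv, hz₂ t]
    have expand : ∀ v : Fin n₂ → ℝ, N.mulVec v = N.mulVecLin v := fun _ => rfl
    rw [expand, map_neg, map_sum]
    have hterm : ∀ i : ℕ, N.mulVecLin ((N ^ i).mulVec (iteratedDeriv (i + 1) f t))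
        = (N ^ (i + 1)).mulVec (iteratedDeriv (i + 1) f t) := by
      intro i
      show N.mulVec ((N ^ i).mulVec (iteratedDeriv (i + 1) f t)) = _
      rw [Matrix.mulVec_mulVec, ← pow_succ']
    simp_rw [hterm]
    rw [Finset.sum_range_succ, Finset.sum_range_succ' (fun i => (N ^ i).mulVec (iteratedDeriv i f t))]
    simp [hN, Matrix.zero_mulVec, Matrix.one_mulVec, iteratedDeriv_zero]
  · intro w hw hweq
    have hz₂eq : ∀ t, N.mulVec (deriv z₂ t) = z₂ t + f t := by
      intro t
      have hderiv : deriv z₂ t =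
          -∑ i ∈ Finset.range (m + 1), (N ^ i).mulVec (iteratedDeriv (i + 1) f t) :=
        (hz₂d t).deriv
      rw [hderiv, hz₂ t]
      have expand : ∀ v : Fin n₂ → ℝ, N.mulVec v = N.mulVecLin v := fun _ => rfl
      rw [expand, map_neg, map_sum]
      have hterm : ∀ i : ℕ, N.mulVecLin ((N ^ i).mulVec (iteratedDeriv (i + 1) f t))
          = (N ^ (i + 1)).mulVec (iteratedDeriv (i + 1) f t) := by
        intro i
        show N.mulVec ((N ^ i).mulVec (iteratedDeriv (i + 1) f t)) = _
        rw [Matrix.mulVec_mulVec, ← pow_succ']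
      simp_rw [hterm]
      rw [Finset.sum_range_succ,
        Finset.sum_range_succ' (fun i => (N ^ i).mulVec (iteratedDeriv i f t))]
      simp [hN, Matrix.zero_mulVec, Matrix.one_mulVec, iteratedDeriv_zero]
    set g : ℝ → Fin n₂ → ℝ := w - z₂ with hgdef
    have hz₂C : ∀ K : WithTop ℕ∞, K ≤ ∞ → ContDiff ℝ K z₂ := by
      intro K hK
      have hzz : z₂ = fun s => -∑ i ∈ Finset.range (m + 1),
          (N ^ i).mulVec (iteratedDeriv i f s) := funext hz₂
      rw [hzz]
      apply ContDiff.neg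
      apply ContDiff.sum
      intro i _
      exact ((LinearMap.toContinuousLinearMap (N ^ i).mulVecLin).contDiff).comp
        (((hfi i).of_le hK))
    have hlinf : ((↑(m + 1) : ℕ∞) : WithTop ℕ∞) ≤ ∞ := by exact_mod_cast le_top
    have hgC : ContDiff ℝ ((↑(m + 1) : ℕ∞) : WithTop ℕ∞) g :=
      hw.sub (hz₂C _ hlinf)
    have h1l : (1 : WithTop ℕ∞) ≤ ((↑(m + 1) : ℕ∞) : WithTop ℕ∞) := by
      exact_mod_cast Nat.one_le_cast.mpr hℓ
    have hwd : Differentiable ℝ w := hw.differentiable (one_pos.trans_le h1l).ne'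
    have hgeq : ∀ t, N.mulVec (deriv g t) = g t := by
      intro t
      have hdg : deriv g t = deriv w t - deriv z₂ t :=
        deriv_sub (hwd t) (hdiff t)
      have expand : ∀ v : Fin n₂ → ℝ, N.mulVec v = N.mulVecLin v := fun _ => rfl
      rw [hdg, expand, map_sub, ← expand, ← expand, hweq t, hz₂eq t]
      simp only [hgdef, Pi.sub_apply]
      abel
    -- deriv g is C^m
    have hcast : ((↑(m + 1) : ℕ∞) : WithTop ℕ∞) = (m : WithTop ℕ∞) + 1 := by
      push_cast
      rfl
    have hdgC : ContDiff ℝ (m : WithTop ℕ∞) (deriv g) := by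
      rw [hcast] at hgC
      exact (contDiff_succ_iff_deriv.mp hgC).2.2
    have key : ∀ k : ℕ, k ≤ m + 1 → ∀ t, g t = (N ^ k).mulVec (iteratedDeriv k g t) := by
      intro k
      induction k with
      | zero =>
        intro _ t
        simp [iteratedDeriv_zero]
      | succ k ih =>
        intro hk t
        have hkm : (k : WithTop ℕ∞) ≤ (m : WithTop ℕ∞) := by
          exact_mod_cast Nat.lt_succ_iff.mp hk
        have hfun : g = fun s => N.mulVec (deriv g s) := funext fun s => (hgeq s).symm
        have step : iteratedDeriv k g t = N.mulVec (iteratedDeriv (k + 1) g t) := by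
          conv_lhs => rw [hfun]
          rw [mulVec_iteratedDeriv_comm N (hdgC.of_le hkm) le_rfl t, ← iteratedDeriv_succ']
        calc g t = (N ^ k).mulVec (iteratedDeriv k g t) := ih (Nat.le_of_succ_le hk) t
          _ = (N ^ k).mulVec (N.mulVec (iteratedDeriv (k + 1) g t)) := by rw [step]
          _ = (N ^ (k + 1)).mulVec (iteratedDeriv (k + 1) g t) := by
              rw [Matrix.mulVec_mulVec, ← pow_succ]
    funext t
    have := key (m + 1) le_rfl t
    rw [hN, Matrix.zero_mulVec] at this
    have h0 : w t - z₂ t = 0 := this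
    exact sub_eq_zero.mp h0
end

section
/- Let E, A be n×n real matrices with a Weierstrass decomposition (Q, P, n₁, n₂, W, N). Then: (a) det(X·N − I_{n₂}) = (−1)^{n₂} as a polynomial in ℝ[X]; (b) the degree of the polynomial det(X·E − A) ∈ ℝ[X] equals n₁; (c) rank(E) = n₁ + rank(N); consequently rank(E) = deg(det(X·E − A)) if and only if N = 0, i.e. the pair (E,A) is impulse-free exactly when the nilpotent block of the Weierstrass form vanishes. -/
/-!
Multiplying by the units `Q` and `P` changes neither `rank E` nor, up to a nonzero constant factor,
`det (X • E - A)`, so both may be read off the Weierstrass form `diag(I, N)`, `diag(W, I)`.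
There the pencil is block diagonal with blocks `X • I - W` and `X • N - I`. The first has
determinant `charpoly W`, of degree `n₁`; the second has determinant `(-1) ^ n₂` because
`det (1 - X • N)` is a unit polynomial with constant term `1`, hence equal to `1` over a reduced
ring.
The rank of `diag(I, N)` is `n₁ + rank N`, so the two numbers agree exactly when `rank N = 0`.
-/

open Matrix Polynomial

namespace Matrix

section Rank

variable {K : Type*} [Field K]

theorem rank_eq_zero_iff {m n : Type*} [Fintype m] [Fintype n] (A : Matrix m n K) :
    A.rank = 0 ↔ A = 0 := by
  classical
  refine ⟨fun h => ?_, fun h => h ▸ rank_zero⟩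
  have hA : A.mulVecLin = 0 := LinearMap.range_eq_bot.mp (Submodule.finrank_eq_zero.mp h)
  rwa [← toLin'_apply', LinearEquiv.map_eq_zero_iff] at hA

theorem _root_.Submodule.finrank_prod {M M' : Type*} [AddCommGroup M] [AddCommGroup M']
    [Module K M] [Module K M'] (p : Submodule K M) (q : Submodule K M')
    [FiniteDimensional K p] [FiniteDimensional K q] :
    Module.finrank K (p.prod q) = Module.finrank K p + Module.finrank K q := by
  have hrange : LinearMap.range (p.subtype.prodMap q.subtype) = p.prod q := by
    rw [LinearMap.range_prodMap, Submodule.range_subtype, Submodule.range_subtype]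
  have hinj : Function.Injective (p.subtype.prodMap q.subtype) :=
    Subtype.val_injective.prodMap Subtype.val_injective
  rw [← hrange, LinearMap.finrank_range_of_inj hinj, Module.finrank_prod]

theorem rank_fromBlocks_zero_zero {m₁ m₂ n₁ n₂ : Type*} [Fintype m₁] [Fintype m₂]
    [Fintype n₁] [Fintype n₂] [DecidableEq n₁] [DecidableEq n₂]
    (B : Matrix m₁ n₁ K) (D : Matrix m₂ n₂ K) :
    (fromBlocks B 0 0 D).rank = B.rank + D.rank := by
  let b₁ := Pi.basisFun K n₁
  let b₂ := Pi.basisFun K n₂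
  let c₁ := Pi.basisFun K m₁
  let c₂ := Pi.basisFun K m₂
  have hBD : fromBlocks B 0 0 D = LinearMap.toMatrix (b₁.prod b₂) (c₁.prod c₂)
      ((toLin b₁ c₁ B).prodMap (toLin b₂ c₂ D)) := by
    ext (i | i) (j | j) <;>
      simp [b₁, b₂, c₁, c₂, LinearMap.toMatrix_apply, toLin_eq_toLin', mulVec_single]
  rw [rank_eq_finrank_range_toLin _ (c₁.prod c₂) (b₁.prod b₂), rank_eq_finrank_range_toLin B c₁ b₁,
    rank_eq_finrank_range_toLin D c₂ b₂, hBD, toLin_toMatrix, LinearMap.range_prodMap,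
    Submodule.finrank_prod]

end Rank

section Pencil

variable {R : Type*} [CommRing R]

noncomputable def pencil {m n : Type*} (E A : Matrix m n R) : Matrix m n R[X] :=
  (X : R[X]) • E.map C - A.map C

@[simp]
theorem pencil_zero {m n : Type*} : pencil (0 : Matrix m n R) 0 = 0 := by
  simp [pencil]

theorem pencil_fromBlocks {l m n o : Type*} (E₁₁ A₁₁ : Matrix l n R) (E₁₂ A₁₂ : Matrix l o R)
    (E₂₁ A₂₁ : Matrix m n R) (E₂₂ A₂₂ : Matrix m o R) :
    pencil (fromBlocks E₁₁ E₁₂ E₂₁ E₂₂) (fromBlocks A₁₁ A₁₂ A₂₁ A₂₂) =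
      fromBlocks (pencil E₁₁ A₁₁) (pencil E₁₂ A₁₂) (pencil E₂₁ A₂₁) (pencil E₂₂ A₂₂) := by
  ext (i | i) (j | j) <;> simp [pencil]

theorem pencil_reindex {m n m' n' : Type*} (e : m ≃ m') (f : n ≃ n') (E A : Matrix m n R) :
    pencil (reindex e f E) (reindex e f A) = reindex e f (pencil E A) := by
  ext i j
  simp [pencil]

variable {n : Type*} [Fintype n]

theorem pencil_mul_mul (Q E A P : Matrix n n R) :
    pencil (Q * E * P) (Q * A * P) = Q.map C * pencil E A * P.map C := by
  simp only [pencil, Matrix.map_mul, Matrix.mul_sub, Matrix.sub_mul, Matrix.mul_smul,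
    Matrix.smul_mul]

variable [DecidableEq n]

theorem det_pencil_mul_mul (Q E A P : Matrix n n R) :
    (pencil (Q * E * P) (Q * A * P)).det = C (Q.det * P.det) * (pencil E A).det := by
  rw [pencil_mul_mul, det_mul, det_mul, ← RingHom.mapMatrix_apply, ← RingHom.mapMatrix_apply,
    ← RingHom.map_det, ← RingHom.map_det, map_mul]
  ring

theorem pencil_one_left (W : Matrix n n R) : pencil 1 W = charmatrix W := by
  ext i j
  by_cases hij : i = j <;> simp [pencil, hij]

theorem charpolyRev_eq_one_of_isNilpotent [IsReduced R] {N : Matrix n n R} (hN : IsNilpotent N) :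
    N.charpolyRev = 1 := by
  have hcoeff := Polynomial.isUnit_iff_coeff_isUnit_isNilpotent.mp
    (isUnit_charpolyRev_of_isNilpotent hN)
  ext i
  rcases eq_or_ne i 0 with rfl | hi
  · rw [coeff_zero_eq_eval_zero, eval_charpolyRev, coeff_one_zero]
  · rw [(hcoeff.2 i hi).eq_zero, coeff_one, if_neg hi]

theorem det_pencil_one_right_of_isNilpotent [IsReduced R] {N : Matrix n n R}
    (hN : IsNilpotent N) : (pencil N 1).det = (-1) ^ Fintype.card n := by
  have hneg : pencil N 1 = -(1 - (X : R[X]) • N.map C) := by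
    rw [neg_sub, pencil, Matrix.map_one _ (map_zero C) (map_one C)]
  rw [hneg, det_neg, ← charpolyRev, charpolyRev_eq_one_of_isNilpotent hN, mul_one]

end Pencil

end Matrix

/-- Characterization of the impulse-free property through the Weierstrass canonical
form (Assumption 2 and Lemma 1). -/
theorem impulse_free_iff_nilpotent_block_zero
    (n n₁ n₂ : ℕ) (hn : n₁ + n₂ = n)
    (E A Q P : Matrix (Fin n) (Fin n) ℝ)
    (W : Matrix (Fin n₁) (Fin n₁) ℝ) (N : Matrix (Fin n₂) (Fin n₂) ℝ)
    (hQ : IsUnit Q) (hP : IsUnit P) (hN : IsNilpotent N)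
    (hE : Matrix.reindex (blockEquiv hn) (blockEquiv hn) (Q * E * P)
        = Matrix.fromBlocks 1 0 0 N)
    (hA : Matrix.reindex (blockEquiv hn) (blockEquiv hn) (Q * A * P)
        = Matrix.fromBlocks W 0 0 1) :
    Matrix.det ((Polynomial.X : Polynomial ℝ) • N.map Polynomial.C - 1)
        = (-1 : Polynomial ℝ) ^ n₂ ∧
    (Matrix.det ((Polynomial.X : Polynomial ℝ) • E.map Polynomial.C
        - A.map Polynomial.C)).natDegree = n₁ ∧
    E.rank = n₁ + N.rank ∧
    (E.rank = (Matrix.det ((Polynomial.X : Polynomial ℝ) • E.map Polynomial.C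
        - A.map Polynomial.C)).natDegree ↔ N = 0) := by
  have hQ' := (isUnit_iff_isUnit_det Q).mp hQ
  have hP' := (isUnit_iff_isUnit_det P).mp hP
  have part_a : (pencil N 1).det = (-1) ^ n₂ := by
    rw [det_pencil_one_right_of_isNilpotent hN, Fintype.card_fin]
  have hdet : C (Q.det * P.det) * (pencil E A).det = W.charpoly * (-1) ^ n₂ := by
    rw [← det_pencil_mul_mul, ← det_reindex_self (blockEquiv hn), ← pencil_reindex, hE, hA,
      pencil_fromBlocks, pencil_zero, pencil_zero, det_fromBlocks_zero₂₁, pencil_one_left, part_a]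
    rfl
  have part_b : (pencil E A).det.natDegree = n₁ := by
    rw [← natDegree_C_mul (mul_ne_zero hQ'.ne_zero hP'.ne_zero), hdet,
      natDegree_mul W.charpoly_monic.ne_zero (pow_ne_zero _ (neg_ne_zero.mpr one_ne_zero)),
      charpoly_natDegree_eq_dim, Fintype.card_fin, natDegree_pow, natDegree_neg, natDegree_one,
      mul_zero, add_zero]
  have part_c : E.rank = n₁ + N.rank := by
    rw [← rank_mul_eq_right_of_isUnit_det Q E hQ', ← rank_mul_eq_left_of_isUnit_det P _ hP',
      ← rank_reindex (blockEquiv hn) (blockEquiv hn), hE, rank_fromBlocks_zero_zero, rank_one,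
      Fintype.card_fin]
  refine ⟨by simpa [pencil] using part_a, part_b, part_c, ?_⟩
  rw [← pencil, part_b, part_c, Nat.add_eq_left, Matrix.rank_eq_zero_iff]
end

section
/- Let E, A be n×n real matrices, b, d, c ∈ ℝⁿ, h > 0. Define the polynomials M(X) := det(X·E − A) ∈ ℝ[X], Δ₂ⱼ(X) := Σᵢ cᵢ·(adjugate(X·E − A))ᵢⱼ for j = 1,…,n, Δ₀(X) := Σⱼ Δ₂ⱼ(X)·bⱼ and Δ₁(X) := Σⱼ Δ₂ⱼ(X)·dⱼ. Let x : ℝ → ℝⁿ, u : ℝ → ℝ and v₀ : ℝ → ℝⁿ be infinitely differentiable with E·ẋ(t) = A·x(t) + b·u(t) + d·u(t−h) + v₀(t) for all t, and y(t) := cᵀx(t). Then for all t: (M(D)y)(t) = (Δ₀(D)u)(t) + (Δ₁(D)(u∘(·−h)))(t) + Σ_{j=1}^{n} (Δ₂ⱼ(D)(v₀)ⱼ)(t). -/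
open Matrix Polynomial

/-- The constant-coefficient differential operator `p(D)` associated with a real
polynomial `p`, applied to a scalar function `f`. -/
noncomputable def polyD (p : Polynomial ℝ) (f : ℝ → ℝ) : ℝ → ℝ :=
  fun t => ∑ i ∈ Finset.range (p.natDegree + 1), p.coeff i * iteratedDeriv i f t

open scoped ContDiff

namespace PolyDAux

lemma itd_smooth {f : ℝ → ℝ} (hf : ContDiff ℝ ∞ f) (i : ℕ) :
    ContDiff ℝ ∞ (iteratedDeriv i f) := by
  rw [iteratedDeriv_eq_iterate]; exact hf.iterate_deriv i

lemma itd_add {i : ℕ} {f g : ℝ → ℝ} (hf : ContDiff ℝ ∞ f) (hg : ContDiff ℝ ∞ g) (t : ℝ) :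
    iteratedDeriv i (fun s => f s + g s) t = iteratedDeriv i f t + iteratedDeriv i g t := by
  simp_rw [← iteratedDerivWithin_univ]
  exact iteratedDerivWithin_add (Set.mem_univ t) uniqueDiffOn_univ
    (hf.contDiffWithinAt.of_le (by exact_mod_cast le_top))
    (hg.contDiffWithinAt.of_le (by exact_mod_cast le_top))

lemma itd_const_mul {i : ℕ} {f : ℝ → ℝ} (hf : ContDiff ℝ ∞ f) (a : ℝ) (t : ℝ) :
    iteratedDeriv i (fun s => a * f s) t = a * iteratedDeriv i f t := by
  simp_rw [← iteratedDerivWithin_univ]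
  exact iteratedDerivWithin_const_mul (Set.mem_univ t) uniqueDiffOn_univ a
    (hf.contDiffWithinAt.of_le (by exact_mod_cast le_top))

lemma itd_zero_fun (i : ℕ) (t : ℝ) : iteratedDeriv i (fun _ : ℝ => (0:ℝ)) t = 0 := by
  induction i with
  | zero => simp
  | succ k ih =>
    rw [iteratedDeriv_succ']
    simp only [deriv_const']
    exact ih

lemma itd_sum {ι : Type*} (S : Finset ι) {F : ι → ℝ → ℝ}
    (hF : ∀ j ∈ S, ContDiff ℝ ∞ (F j)) (i : ℕ) (t : ℝ) :
    iteratedDeriv i (fun s => ∑ j ∈ S, F j s) t = ∑ j ∈ S, iteratedDeriv i (F j) t := by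
  induction S using Finset.cons_induction with
  | empty => simpa using itd_zero_fun i t
  | cons a S ha ih =>
    simp only [Finset.sum_cons]
    rw [itd_add (hF a (Finset.mem_cons_self a S))
      (ContDiff.sum fun j hj => hF j (Finset.mem_cons_of_mem hj)),
      ih (fun j hj => hF j (Finset.mem_cons_of_mem hj))]

lemma itd_itd (i j : ℕ) (f : ℝ → ℝ) :
    iteratedDeriv i (iteratedDeriv j f) = iteratedDeriv (i + j) f := by
  simp only [iteratedDeriv_eq_iterate]
  exact (Function.iterate_add_apply deriv i j f).symm

end PolyDAux

namespace PolyDAux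

lemma polyD_eq (p : Polynomial ℝ) (f : ℝ → ℝ) {N : ℕ} (hN : p.natDegree < N) (t : ℝ) :
    polyD p f t = ∑ i ∈ Finset.range N, p.coeff i * iteratedDeriv i f t := by
  refine Finset.sum_subset (Finset.range_subset_range.2 hN) ?_
  intro i _ hi
  rw [Polynomial.coeff_eq_zero_of_natDegree_lt (by
    simpa using Nat.lt_of_succ_le (Nat.not_lt.1 (by simpa using hi))), zero_mul]

lemma polyD_zero (f : ℝ → ℝ) (t : ℝ) : polyD 0 f t = 0 := by
  simp [polyD]

lemma polyD_add (p q : Polynomial ℝ) (f : ℝ → ℝ) (t : ℝ) :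
    polyD (p + q) f t = polyD p f t + polyD q f t := by
  set N := max (max p.natDegree q.natDegree) (p+q).natDegree + 1 with hNdef
  rw [polyD_eq p f (N := N) (by omega), polyD_eq q f (N := N) (by omega),
    polyD_eq (p+q) f (N := N) (by omega), ← Finset.sum_add_distrib]
  refine Finset.sum_congr rfl fun i _ => ?_
  rw [Polynomial.coeff_add, add_mul]

lemma polyD_C_mul (a : ℝ) (p : Polynomial ℝ) (f : ℝ → ℝ) (t : ℝ) :
    polyD (Polynomial.C a * p) f t = a * polyD p f t := by
  rw [polyD_eq (Polynomial.C a * p) f (N := p.natDegree + 1)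
    (Nat.lt_succ_of_le (Polynomial.natDegree_C_mul_le a p)), polyD, Finset.mul_sum]
  refine Finset.sum_congr rfl fun i _ => ?_
  rw [Polynomial.coeff_C_mul, mul_assoc]

lemma polyD_X_pow (k : ℕ) (f : ℝ → ℝ) (t : ℝ) :
    polyD ((Polynomial.X : Polynomial ℝ) ^ k) f t = iteratedDeriv k f t := by
  simp [polyD, Polynomial.coeff_X_pow, Polynomial.natDegree_X_pow]

lemma polyD_smooth (p : Polynomial ℝ) {f : ℝ → ℝ} (hf : ContDiff ℝ ∞ f) :
    ContDiff ℝ ∞ (polyD p f) := by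
  unfold polyD
  exact ContDiff.sum fun i _ => contDiff_const.mul (itd_smooth hf i)

lemma polyD_X_mul (p : Polynomial ℝ) {f : ℝ → ℝ} (hf : ContDiff ℝ ∞ f) (t : ℝ) :
    polyD (Polynomial.X * p) f t = deriv (polyD p f) t := by
  have hder : ∀ (i : ℕ), DifferentiableAt ℝ (iteratedDeriv i f) t :=
    fun i => ((itd_smooth hf i).differentiable (by simp)).differentiableAt
  have hnd : (Polynomial.X * p).natDegree < p.natDegree + 2 := by
    have := Polynomial.natDegree_mul_le (p := (Polynomial.X : Polynomial ℝ)) (q := p)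
    simp only [Polynomial.natDegree_X] at this
    omega
  rw [polyD_eq (Polynomial.X * p) f hnd, Finset.sum_range_succ']
  simp only [Polynomial.coeff_X_mul]
  have h0 : (Polynomial.X * p).coeff 0 = 0 := by
    simp [Polynomial.coeff_mul, Finset.Nat.antidiagonal_zero]
  rw [h0, zero_mul, add_zero]
  unfold polyD
  rw [deriv_fun_sum (fun i _ => (hder i).const_mul _)]
  refine Finset.sum_congr rfl fun i _ => ?_
  rw [deriv_const_mul _ (hder i), ← iteratedDeriv_succ]

lemma polyD_X_pow_mul (k : ℕ) (p : Polynomial ℝ) {f : ℝ → ℝ} (hf : ContDiff ℝ ∞ f) (t : ℝ) :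
    polyD ((Polynomial.X : Polynomial ℝ) ^ k * p) f t = iteratedDeriv k (polyD p f) t := by
  induction k generalizing t with
  | zero => simp [iteratedDeriv_zero]
  | succ k ih =>
    have : (Polynomial.X : Polynomial ℝ) ^ (k+1) * p = Polynomial.X * (Polynomial.X ^ k * p) := by
      ring
    rw [this, polyD_X_mul _ hf, iteratedDeriv_succ]
    have : polyD ((Polynomial.X : Polynomial ℝ) ^ k * p) f = iteratedDeriv k (polyD p f) :=
      funext fun s => ih s
    rw [this]

lemma polyD_mul (p q : Polynomial ℝ) {f : ℝ → ℝ} (hf : ContDiff ℝ ∞ f) (t : ℝ) :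
    polyD (p * q) f t = polyD p (polyD q f) t := by
  induction p using Polynomial.induction_on' generalizing t with
  | add r s hr hs =>
    rw [add_mul, polyD_add, polyD_add, hr, hs]
  | monomial k a =>
    rw [← Polynomial.C_mul_X_pow_eq_monomial, mul_assoc, polyD_C_mul, polyD_C_mul,
      polyD_X_pow_mul k q hf, polyD_X_pow]

lemma polyD_sum {ι : Type*} (S : Finset ι) (P : ι → Polynomial ℝ) (f : ℝ → ℝ) (t : ℝ) :
    polyD (∑ j ∈ S, P j) f t = ∑ j ∈ S, polyD (P j) f t := by
  induction S using Finset.cons_induction with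
  | empty => simpa using polyD_zero f t
  | cons a S ha ih => rw [Finset.sum_cons, polyD_add, ih, Finset.sum_cons]

lemma polyD_fun_add (p : Polynomial ℝ) {f g : ℝ → ℝ} (hf : ContDiff ℝ ∞ f)
    (hg : ContDiff ℝ ∞ g) (t : ℝ) :
    polyD p (fun s => f s + g s) t = polyD p f t + polyD p g t := by
  unfold polyD
  rw [← Finset.sum_add_distrib]
  refine Finset.sum_congr rfl fun i _ => ?_
  rw [itd_add hf hg, mul_add]

lemma polyD_fun_const_mul (p : Polynomial ℝ) {f : ℝ → ℝ} (hf : ContDiff ℝ ∞ f) (a t : ℝ) :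
    polyD p (fun s => a * f s) t = a * polyD p f t := by
  unfold polyD
  rw [Finset.mul_sum]
  refine Finset.sum_congr rfl fun i _ => ?_
  rw [itd_const_mul hf, mul_left_comm]

lemma polyD_fun_sum {ι : Type*} (p : Polynomial ℝ) (S : Finset ι) {F : ι → ℝ → ℝ}
    (hF : ∀ j ∈ S, ContDiff ℝ ∞ (F j)) (t : ℝ) :
    polyD p (fun s => ∑ j ∈ S, F j s) t = ∑ j ∈ S, polyD p (F j) t := by
  unfold polyD
  rw [Finset.sum_comm]
  refine Finset.sum_congr rfl fun i _ => ?_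
  rw [itd_sum S hF, Finset.mul_sum]

lemma polyD_C (a : ℝ) (f : ℝ → ℝ) (t : ℝ) : polyD (Polynomial.C a) f t = a * f t := by
  simp [polyD]

lemma polyD_X (f : ℝ → ℝ) (t : ℝ) : polyD (Polynomial.X : Polynomial ℝ) f t = deriv f t := by
  simpa [iteratedDeriv_one] using polyD_X_pow 1 f t

end PolyDAux



/-- The input–output differential equation of the singular delay system
(Theorem 1(i), equations (5)–(6)). -/
theorem input_output_differential_equation
    (n : ℕ) (E A : Matrix (Fin n) (Fin n) ℝ) (b d c : Fin n → ℝ) (h : ℝ) (hh : 0 < h)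
    (M : Polynomial ℝ) (Δ₂ : Fin n → Polynomial ℝ) (Δ₀ Δ₁ : Polynomial ℝ)
    (hM : M = Matrix.det ((Polynomial.X : Polynomial ℝ) • E.map Polynomial.C
        - A.map Polynomial.C))
    (hΔ₂ : ∀ j, Δ₂ j = ∑ i, Polynomial.C (c i) *
        (Matrix.adjugate ((Polynomial.X : Polynomial ℝ) • E.map Polynomial.C
          - A.map Polynomial.C)) i j)
    (hΔ₀ : Δ₀ = ∑ j, Δ₂ j * Polynomial.C (b j))
    (hΔ₁ : Δ₁ = ∑ j, Δ₂ j * Polynomial.C (d j))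
    (x : ℝ → Fin n → ℝ) (u : ℝ → ℝ) (v₀ : ℝ → Fin n → ℝ) (y : ℝ → ℝ)
    (hx : ContDiff ℝ (⊤ : ℕ∞) x) (hu : ContDiff ℝ (⊤ : ℕ∞) u) (hv₀ : ContDiff ℝ (⊤ : ℕ∞) v₀)
    (hsys : ∀ t : ℝ, E.mulVec (deriv x t)
        = A.mulVec (x t) + u t • b + u (t - h) • d + v₀ t)
    (hy : ∀ t : ℝ, y t = c ⬝ᵥ x t) :
    ∀ t : ℝ, polyD M y t
      = polyD Δ₀ u t + polyD Δ₁ (fun s => u (s - h)) t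
        + ∑ j, polyD (Δ₂ j) (fun s => v₀ s j) t := by
  intro t
  set P : Matrix (Fin n) (Fin n) (Polynomial ℝ) :=
    (Polynomial.X : Polynomial ℝ) • E.map Polynomial.C - A.map Polynomial.C with hP
  -- smoothness facts
  have hx' : ContDiff ℝ ∞ x := hx.of_le (by simp)
  have hu' : ContDiff ℝ ∞ u := hu.of_le (by simp)
  have hv' : ContDiff ℝ ∞ v₀ := hv₀.of_le (by simp)
  have hxl : ∀ l, ContDiff ℝ ∞ (fun s => x s l) := by
    intro l
    exact (ContinuousLinearMap.proj (R := ℝ) (φ := fun _ : Fin n => ℝ) l).contDiff.comp hx'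
  have hvl : ∀ l, ContDiff ℝ ∞ (fun s => v₀ s l) := by
    intro l
    exact (ContinuousLinearMap.proj (R := ℝ) (φ := fun _ : Fin n => ℝ) l).contDiff.comp hv'
  have hushift : ContDiff ℝ ∞ (fun s => u (s - h)) :=
    hu'.comp (contDiff_id.sub contDiff_const)
  have hderiv : ∀ (s : ℝ) (l : Fin n), deriv x s l = deriv (fun r => x r l) s := by
    intro s l
    rw [deriv_pi (fun i => ((hxl i).differentiable (by simp)).differentiableAt)]
  -- entries of P
  have hPentry : ∀ j l, P j l =
      Polynomial.C (E j l) * Polynomial.X + Polynomial.C (-(A j l)) := by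
    intro j l
    simp only [hP, Matrix.sub_apply, Matrix.smul_apply, Matrix.map_apply, smul_eq_mul,
      map_neg]
    ring
  have hPapp : ∀ (j l : Fin n) (g : ℝ → ℝ) (s : ℝ),
      polyD (P j l) g s = E j l * deriv g s + (-(A j l)) * g s := by
    intro j l g s
    rw [hPentry j l, PolyDAux.polyD_add, PolyDAux.polyD_C]
    have : polyD (Polynomial.C (E j l) * Polynomial.X) g s = E j l * deriv g s := by
      rw [PolyDAux.polyD_C_mul, PolyDAux.polyD_X]
    rw [this]
  -- the system rewritten through polyD
  have hkey : ∀ (j : Fin n) (s : ℝ),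
      (∑ l, polyD (P j l) (fun r => x r l) s)
        = b j * u s + (d j * u (s - h) + v₀ s j) := by
    intro j s
    have hs := congrFun (hsys s) j
    simp only [Pi.add_apply, Pi.smul_apply, smul_eq_mul, Matrix.mulVec, dotProduct] at hs
    have : (∑ l, polyD (P j l) (fun r => x r l) s)
        = ∑ l, (E j l * deriv x s l + (-(A j l)) * x s l) := by
      refine Finset.sum_congr rfl fun l _ => ?_
      rw [hPapp, hderiv s l]
    rw [this, Finset.sum_add_distrib]
    have hA : ∑ l, (-(A j l)) * x s l = -(∑ l, A j l * x s l) := by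
      rw [← Finset.sum_neg_distrib]
      exact Finset.sum_congr rfl fun l _ => by ring
    rw [hA, hs]
    ring
  -- the polynomial identity from the adjugate
  have hpoly : ∀ l, (∑ j, Δ₂ j * P j l) = Polynomial.C (c l) * M := by
    intro l
    calc ∑ j, Δ₂ j * P j l
        = ∑ j, ∑ i, Polynomial.C (c i) * (Matrix.adjugate P i j * P j l) := by
          refine Finset.sum_congr rfl fun j _ => ?_
          rw [hΔ₂ j, Finset.sum_mul]
          exact Finset.sum_congr rfl fun i _ => by rw [mul_assoc]
      _ = ∑ i, Polynomial.C (c i) * ∑ j, Matrix.adjugate P i j * P j l := by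
          rw [Finset.sum_comm]
          exact Finset.sum_congr rfl fun i _ => by rw [Finset.mul_sum]
      _ = ∑ i, Polynomial.C (c i) * ((Matrix.adjugate P * P) i l) := by
          refine Finset.sum_congr rfl fun i _ => ?_
          rw [Matrix.mul_apply]
      _ = Polynomial.C (c l) * M := by
          rw [Matrix.adjugate_mul]
          simp [Matrix.smul_apply, Matrix.one_apply, smul_eq_mul, mul_ite, hM,
            Finset.sum_ite_eq', mul_comm]
  -- main computation
  have hyfun : y = fun s => ∑ l, c l * x s l := by
    funext s
    rw [hy s]
    simp [dotProduct]
  calc polyD M y t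
      = ∑ l, polyD M (fun s => c l * x s l) t := by
        rw [hyfun]
        exact PolyDAux.polyD_fun_sum M Finset.univ
          (fun l _ => contDiff_const.mul (hxl l)) t
    _ = ∑ l, polyD (Polynomial.C (c l) * M) (fun s => x s l) t := by
        refine Finset.sum_congr rfl fun l _ => ?_
        rw [PolyDAux.polyD_C_mul, PolyDAux.polyD_fun_const_mul M (hxl l)]
    _ = ∑ l, ∑ j, polyD (Δ₂ j * P j l) (fun s => x s l) t := by
        refine Finset.sum_congr rfl fun l _ => ?_
        rw [← hpoly l, PolyDAux.polyD_sum]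
    _ = ∑ j, ∑ l, polyD (Δ₂ j) (polyD (P j l) (fun s => x s l)) t := by
        rw [Finset.sum_comm]
        exact Finset.sum_congr rfl fun j _ => Finset.sum_congr rfl fun l _ =>
          PolyDAux.polyD_mul _ _ (hxl l) t
    _ = ∑ j, polyD (Δ₂ j) (fun s => ∑ l, polyD (P j l) (fun r => x r l) s) t := by
        refine Finset.sum_congr rfl fun j _ => ?_
        rw [PolyDAux.polyD_fun_sum _ _ (fun l _ => PolyDAux.polyD_smooth _ (hxl l))]
    _ = ∑ j, polyD (Δ₂ j) (fun s => b j * u s + (d j * u (s - h) + v₀ s j)) t := by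
        refine Finset.sum_congr rfl fun j _ => ?_
        congr 1
        funext s
        exact hkey j s
    _ = ∑ j, (b j * polyD (Δ₂ j) u t
          + (d j * polyD (Δ₂ j) (fun s => u (s - h)) t
            + polyD (Δ₂ j) (fun s => v₀ s j) t)) := by
        refine Finset.sum_congr rfl fun j _ => ?_
        rw [PolyDAux.polyD_fun_add _ (contDiff_const.mul hu')
          ((contDiff_const.mul hushift).add (hvl j)),
          PolyDAux.polyD_fun_add _ (contDiff_const.mul hushift) (hvl j),
          PolyDAux.polyD_fun_const_mul _ hu', PolyDAux.polyD_fun_const_mul _ hushift]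
    _ = polyD Δ₀ u t + polyD Δ₁ (fun s => u (s - h)) t
          + ∑ j, polyD (Δ₂ j) (fun s => v₀ s j) t := by
        rw [hΔ₀, hΔ₁, PolyDAux.polyD_sum, PolyDAux.polyD_sum,
          Finset.sum_add_distrib, Finset.sum_add_distrib, add_assoc]
        congr 1
        · refine Finset.sum_congr rfl fun j _ => ?_
          rw [mul_comm (Δ₂ j), PolyDAux.polyD_C_mul]
        · congr 1
          refine Finset.sum_congr rfl fun j _ => ?_
          rw [mul_comm (Δ₂ j), PolyDAux.polyD_C_mul]
end

section
/- Let E, A be n×n real matrices forming a regular pencil with a Weierstrass decomposition (Q, P, n₁, n₂, W, N), with N^ℓ = 0, and let b, c ∈ ℝⁿ. Split Qb = (α₁, α₂) and Pᵀc = (γ₁, γ₂) with first components in ℝ^{n₁}. Then, over the field K = ℝ(X) of real rational functions, the matrix X·E − A is invertible and cᵀ·(X·E − A)⁻¹·b = γ₁ᵀ·(X·I_{n₁} − W)⁻¹·α₁ − Σ_{i=0}^{ℓ−1} Xⁱ·(γ₂ᵀ·Nⁱ·α₂). -/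
open Matrix Polynomial
set_option synthInstance.maxHeartbeats 1000000
set_option maxHeartbeats 1000000

/-- First (slow) component of a vector in `ℝⁿ` under the block identification. -/
def part1 {n₁ n₂ n : ℕ} (h : n₁ + n₂ = n) (v : Fin n → ℝ) : Fin n₁ → ℝ :=
  fun i => v ((blockEquiv h).symm (Sum.inl i))

/-- Second (fast) component of a vector in `ℝⁿ` under the block identification. -/
def part2 {n₁ n₂ n : ℕ} (h : n₁ + n₂ = n) (v : Fin n → ℝ) : Fin n₂ → ℝ :=
  fun i => v ((blockEquiv h).symm (Sum.inr i))

/-! Multiplying by `Q` and `P` turns the pencil `X • E - A` into the block-diagonal pencil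
`diag (X • 1 - W, X • N - 1)`. Over `ℝ(X)` the first block is invertible, its determinant being
the monic characteristic polynomial of `W`, and the second one is inverted by the finite Neumann
series `-∑ Xⁱ • Nⁱ` since `N` is nilpotent. So `(X • E - A)⁻¹ = P * diag (…)⁻¹ * Q`, and pairing
with `c` and `b` splits the transfer function along the two blocks. -/

namespace Matrix

open Finset

variable {R : Type*} [CommRing R] {m m₁ m₂ : Type*}

theorem map_mulVec_comp {S : Type*} [CommRing S] [Fintype m₁] (f : R →+* S)
    (M : Matrix m m₁ R) (v : m₁ → R) : M.map f *ᵥ (f ∘ v) = f ∘ (M *ᵥ v) :=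
  funext fun i => (f.map_mulVec M v i).symm

theorem dotProduct_submatrix_mulVec [Fintype m] [Fintype m₁] (e : m ≃ m₁)
    (S : Matrix m₁ m₁ R) (u v : m → R) :
    u ⬝ᵥ S.submatrix e e *ᵥ v = (u ∘ e.symm) ⬝ᵥ S *ᵥ (v ∘ e.symm) := by
  rw [submatrix_mulVec_equiv, ← dotProduct_comp_equiv_symm, Equiv.symm_symm]

theorem inv_sub_one_of_pow_eq_zero [Fintype m] [DecidableEq m] {M : Matrix m m R} {ℓ : ℕ}
    (hM : M ^ ℓ = 0) : (M - 1)⁻¹ = -∑ i ∈ range ℓ, M ^ i :=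
  inv_eq_right_inv (by rw [mul_neg, mul_geom_sum, hM, zero_sub, neg_neg])

theorem dotProduct_inv_mulVec_mul_mul [Fintype m] [DecidableEq m] {Q P : Matrix m m R}
    (hQ : IsUnit Q) (hP : IsUnit P) (M : Matrix m m R) (b c : m → R) :
    (Pᵀ *ᵥ c) ⬝ᵥ (Q * M * P)⁻¹ *ᵥ (Q *ᵥ b) = c ⬝ᵥ M⁻¹ *ᵥ b := by
  rw [mulVec_transpose, ← dotProduct_mulVec, mulVec_mulVec, mulVec_mulVec, mul_inv_rev,
    mul_inv_rev, mul_nonsing_inv_cancel_left _ _ ((isUnit_iff_isUnit_det P).1 hP),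
    nonsing_inv_mul_cancel_right _ _ ((isUnit_iff_isUnit_det Q).1 hQ)]

theorem dotProduct_fromBlocks_zero_inv_mulVec [Fintype m₁] [DecidableEq m₁] [Fintype m₂]
    [DecidableEq m₂] {D₁ : Matrix m₁ m₁ R} {D₂ : Matrix m₂ m₂ R} (hD : IsUnit D₁ ↔ IsUnit D₂)
    (u v : m₁ ⊕ m₂ → R) :
    u ⬝ᵥ (fromBlocks D₁ 0 0 D₂)⁻¹ *ᵥ v
      = (u ∘ Sum.inl) ⬝ᵥ D₁⁻¹ *ᵥ (v ∘ Sum.inl) + (u ∘ Sum.inr) ⬝ᵥ D₂⁻¹ *ᵥ (v ∘ Sum.inr) := by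
  rw [inv_fromBlocks_zero₂₁_of_isUnit_iff _ _ _ hD, fromBlocks_mulVec, ← Sum.elim_comp_inl_inr u,
    sumElim_dotProduct_sumElim]
  simp

section Weierstrass

variable [Fintype m] [DecidableEq m₁] [DecidableEq m₂] {e : m ≃ m₁ ⊕ m₂}
  {E A Q P : Matrix m m R} {W : Matrix m₁ m₁ R} {N : Matrix m₂ m₂ R}

theorem reindex_pencil_eq_fromBlocks
    (hE : reindex e e (Q * E * P) = fromBlocks 1 0 0 N)
    (hA : reindex e e (Q * A * P) = fromBlocks W 0 0 1) (x : R) :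
    reindex e e (Q * (x • E - A) * P) = fromBlocks (x • 1 - W) 0 0 (x • N - 1) := by
  have hlin : reindex e e (Q * (x • E - A) * P)
      = x • reindex e e (Q * E * P) - reindex e e (Q * A * P) := by
    simp only [Matrix.mul_sub, Matrix.sub_mul, Matrix.mul_smul, Matrix.smul_mul,
      ← coe_reindexLinearEquiv R R, map_sub, map_smul]
  rw [hlin, hE, hA, fromBlocks_smul, sub_eq_add_neg, fromBlocks_neg, fromBlocks_add]
  simp only [smul_zero, neg_zero, add_zero, ← sub_eq_add_neg]

variable [DecidableEq m] [Fintype m₁] [Fintype m₂]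

theorem isUnit_pencil_of_reindex_eq_fromBlocks
    (hE : reindex e e (Q * E * P) = fromBlocks 1 0 0 N)
    (hA : reindex e e (Q * A * P) = fromBlocks W 0 0 1) (hN : IsNilpotent N) {x : R}
    (hW : IsUnit (x • 1 - W)) :
    IsUnit (x • E - A) := by
  have hblocks : IsUnit (fromBlocks (x • 1 - W) 0 0 (x • N - 1)) :=
    isUnit_fromBlocks_zero₂₁.2 ⟨hW, (hN.smul x).isUnit_sub_one⟩
  rw [← reindex_pencil_eq_fromBlocks hE hA, isUnit_iff_isUnit_det, det_reindex_self, det_mul,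
    det_mul] at hblocks
  exact (isUnit_iff_isUnit_det _).2
    (isUnit_of_mul_isUnit_right (isUnit_of_mul_isUnit_left hblocks))

theorem dotProduct_pencil_inv_mulVec_of_reindex_eq_fromBlocks (hQ : IsUnit Q) (hP : IsUnit P)
    (hE : reindex e e (Q * E * P) = fromBlocks 1 0 0 N)
    (hA : reindex e e (Q * A * P) = fromBlocks W 0 0 1) {ℓ : ℕ} (hN : N ^ ℓ = 0) {x : R}
    (hW : IsUnit (x • 1 - W)) (b c : m → R) :
    c ⬝ᵥ (x • E - A)⁻¹ *ᵥ b
      = ((Pᵀ *ᵥ c) ∘ e.symm ∘ Sum.inl) ⬝ᵥ (x • 1 - W)⁻¹ *ᵥ ((Q *ᵥ b) ∘ e.symm ∘ Sum.inl)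
        - ∑ i ∈ range ℓ, x ^ i *
            (((Pᵀ *ᵥ c) ∘ e.symm ∘ Sum.inr) ⬝ᵥ N ^ i *ᵥ ((Q *ᵥ b) ∘ e.symm ∘ Sum.inr)) := by
  have hxN : (x • N) ^ ℓ = 0 := by rw [_root_.smul_pow, hN, smul_zero]
  have hpencil :
      Q * (x • E - A) * P = (fromBlocks (x • 1 - W) 0 0 (x • N - 1)).submatrix e e := by
    rw [← reindex_pencil_eq_fromBlocks hE hA, reindex_apply, submatrix_submatrix]
    simp
  have hblocks : IsUnit (x • 1 - W) ↔ IsUnit (x • N - 1) :=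
    ⟨fun _ => IsNilpotent.isUnit_sub_one ⟨ℓ, hxN⟩, fun _ => hW⟩
  rw [← dotProduct_inv_mulVec_mul_mul hQ hP, hpencil, inv_submatrix_equiv,
    dotProduct_submatrix_mulVec, dotProduct_fromBlocks_zero_inv_mulVec hblocks,
    inv_sub_one_of_pow_eq_zero hxN]
  simp only [neg_mulVec, dotProduct_neg, sum_mulVec, dotProduct_sum, _root_.smul_pow,
    smul_mulVec, dotProduct_smul, smul_eq_mul, sub_eq_add_neg]
  rfl

end Weierstrass

end Matrix

theorem RatFunc.det_X_smul_one_sub_map {K : Type*} [Field K] {n : Type*} [Fintype n]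
    [DecidableEq n] (W : Matrix n n K) :
    det ((RatFunc.X : RatFunc K) • 1 - W.map (algebraMap K (RatFunc K)))
      = algebraMap K[X] (RatFunc K) W.charpoly := by
  rw [charpoly, RingHom.map_det]
  congr 1
  ext i j
  by_cases hij : i = j
  · subst hij
    simp [RatFunc.algebraMap_C]
  · simp [charmatrix_apply_ne _ _ _ hij, one_apply_ne hij, RatFunc.algebraMap_C]

theorem RatFunc.isUnit_X_smul_one_sub_map {K : Type*} [Field K] {n : Type*} [Fintype n]
    [DecidableEq n] (W : Matrix n n K) :
    IsUnit ((RatFunc.X : RatFunc K) • 1 - W.map (algebraMap K (RatFunc K))) := by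
  rw [isUnit_iff_isUnit_det, RatFunc.det_X_smul_one_sub_map, isUnit_iff_ne_zero,
    map_ne_zero_iff _ (RatFunc.algebraMap_injective K)]
  exact W.charpoly_monic.ne_zero

theorem transfer_function_identity_general
    (n n₁ n₂ : ℕ) (hn : n₁ + n₂ = n)
    (E A Q P : Matrix (Fin n) (Fin n) ℝ)
    (W : Matrix (Fin n₁) (Fin n₁) ℝ) (N : Matrix (Fin n₂) (Fin n₂) ℝ)
    (ℓ : ℕ) (hN : N ^ ℓ = 0)
    (hQ : IsUnit Q) (hP : IsUnit P)
    (hE : Matrix.reindex (blockEquiv hn) (blockEquiv hn) (Q * E * P)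
        = Matrix.fromBlocks 1 0 0 N)
    (hA : Matrix.reindex (blockEquiv hn) (blockEquiv hn) (Q * A * P)
        = Matrix.fromBlocks W 0 0 1)
    (b c : Fin n → ℝ)
    (α₁ : Fin n₁ → ℝ) (α₂ : Fin n₂ → ℝ)
    (hα₁ : α₁ = part1 hn (Q.mulVec b)) (hα₂ : α₂ = part2 hn (Q.mulVec b))
    (γ₁ : Fin n₁ → ℝ) (γ₂ : Fin n₂ → ℝ)
    (hγ₁ : γ₁ = part1 hn (Pᵀ.mulVec c)) (hγ₂ : γ₂ = part2 hn (Pᵀ.mulVec c)) :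
    IsUnit ((RatFunc.X : RatFunc ℝ) • E.map (algebraMap ℝ (RatFunc ℝ))
        - A.map (algebraMap ℝ (RatFunc ℝ))) ∧
    (fun i => algebraMap ℝ (RatFunc ℝ) (c i)) ⬝ᵥ
      (((RatFunc.X : RatFunc ℝ) • E.map (algebraMap ℝ (RatFunc ℝ))
        - A.map (algebraMap ℝ (RatFunc ℝ)))⁻¹.mulVec
          (fun i => algebraMap ℝ (RatFunc ℝ) (b i)))
      = (fun i => algebraMap ℝ (RatFunc ℝ) (γ₁ i)) ⬝ᵥ
          (((RatFunc.X : RatFunc ℝ) • (1 : Matrix (Fin n₁) (Fin n₁) (RatFunc ℝ))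
            - W.map (algebraMap ℝ (RatFunc ℝ)))⁻¹.mulVec
              (fun i => algebraMap ℝ (RatFunc ℝ) (α₁ i)))
        - ∑ i ∈ Finset.range ℓ, (RatFunc.X : RatFunc ℝ) ^ i *
            algebraMap ℝ (RatFunc ℝ) (γ₂ ⬝ᵥ (N ^ i).mulVec α₂) := by
  subst hα₁ hα₂ hγ₁ hγ₂
  set φ := algebraMap ℝ (RatFunc ℝ)
  set e := blockEquiv hn
  have hmap {M : Matrix (Fin n) (Fin n) ℝ} {S} (h : reindex e e (Q * M * P) = S) :
      reindex e e (Q.map φ * M.map φ * P.map φ) = S.map φ := by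
    rw [← Matrix.map_mul, ← Matrix.map_mul, ← h]
    rfl
  have hEφ : reindex e e (Q.map φ * E.map φ * P.map φ) = fromBlocks 1 0 0 (N.map φ) := by
    simpa [fromBlocks_map] using hmap hE
  have hAφ : reindex e e (Q.map φ * A.map φ * P.map φ) = fromBlocks (W.map φ) 0 0 1 := by
    simpa [fromBlocks_map] using hmap hA
  have hNφ : N.map φ ^ ℓ = 0 := by rw [← Matrix.map_pow, hN, Matrix.map_zero _ (map_zero φ)]
  have hWφ := RatFunc.isUnit_X_smul_one_sub_map W
  have hQb : Q.map φ *ᵥ (fun i => φ (b i)) = fun i => φ ((Q *ᵥ b) i) :=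
    map_mulVec_comp φ Q b
  have hPc : (P.map φ)ᵀ *ᵥ (fun i => φ (c i)) = fun i => φ ((Pᵀ *ᵥ c) i) := by
    rw [← transpose_map]
    exact map_mulVec_comp φ Pᵀ c
  refine ⟨isUnit_pencil_of_reindex_eq_fromBlocks hEφ hAφ ⟨ℓ, hNφ⟩ hWφ, ?_⟩
  have hQφ : IsUnit (Q.map φ) := hQ.map φ.mapMatrix
  have hPφ : IsUnit (P.map φ) := hP.map φ.mapMatrix
  rw [dotProduct_pencil_inv_mulVec_of_reindex_eq_fromBlocks hQφ hPφ hEφ hAφ hNφ hWφ, hQb, hPc]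
  refine congrArg (_ - ·) (Finset.sum_congr rfl fun i _ => congrArg _ ?_)
  rw [← Matrix.map_pow, RingHom.map_dotProduct, ← map_mulVec_comp]
  rfl

/-- Transfer-function identity of Theorem B.1(ii) (delay-free part), over the field
`K = ℝ(X)` of real rational functions. -/
theorem transfer_function_identity
    (n n₁ n₂ : ℕ) (hn : n₁ + n₂ = n)
    (E A Q P : Matrix (Fin n) (Fin n) ℝ)
    (W : Matrix (Fin n₁) (Fin n₁) ℝ) (N : Matrix (Fin n₂) (Fin n₂) ℝ)
    (ℓ : ℕ) (hN : N ^ ℓ = 0)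
    (hQ : IsUnit Q) (hP : IsUnit P)
    (hreg : Matrix.det ((Polynomial.X : Polynomial ℝ) • E.map Polynomial.C
        - A.map Polynomial.C) ≠ 0)
    (hE : Matrix.reindex (blockEquiv hn) (blockEquiv hn) (Q * E * P)
        = Matrix.fromBlocks 1 0 0 N)
    (hA : Matrix.reindex (blockEquiv hn) (blockEquiv hn) (Q * A * P)
        = Matrix.fromBlocks W 0 0 1)
    (b c : Fin n → ℝ)
    (α₁ : Fin n₁ → ℝ) (α₂ : Fin n₂ → ℝ)
    (hα₁ : α₁ = part1 hn (Q.mulVec b)) (hα₂ : α₂ = part2 hn (Q.mulVec b))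
    (γ₁ : Fin n₁ → ℝ) (γ₂ : Fin n₂ → ℝ)
    (hγ₁ : γ₁ = part1 hn (Pᵀ.mulVec c)) (hγ₂ : γ₂ = part2 hn (Pᵀ.mulVec c)) :
    IsUnit ((RatFunc.X : RatFunc ℝ) • E.map (algebraMap ℝ (RatFunc ℝ))
        - A.map (algebraMap ℝ (RatFunc ℝ))) ∧
    (fun i => algebraMap ℝ (RatFunc ℝ) (c i)) ⬝ᵥ
      (((RatFunc.X : RatFunc ℝ) • E.map (algebraMap ℝ (RatFunc ℝ))
        - A.map (algebraMap ℝ (RatFunc ℝ)))⁻¹.mulVec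
          (fun i => algebraMap ℝ (RatFunc ℝ) (b i)))
      = (fun i => algebraMap ℝ (RatFunc ℝ) (γ₁ i)) ⬝ᵥ
          (((RatFunc.X : RatFunc ℝ) • (1 : Matrix (Fin n₁) (Fin n₁) (RatFunc ℝ))
            - W.map (algebraMap ℝ (RatFunc ℝ)))⁻¹.mulVec
              (fun i => algebraMap ℝ (RatFunc ℝ) (α₁ i)))
        - ∑ i ∈ Finset.range ℓ, (RatFunc.X : RatFunc ℝ) ^ i *
            algebraMap ℝ (RatFunc ℝ) (γ₂ ⬝ᵥ (N ^ i).mulVec α₂) :=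
  transfer_function_identity_general n n₁ n₂ hn E A Q P W N ℓ hN hQ hP hE hA b c α₁ α₂ hα₁ hα₂ γ₁ γ₂
    hγ₁ hγ₂
end

section
/- Let h > 0, let M, Δ₀, Δ₁, F₀, R₀, R₁, S₀, S₁, T, L be real polynomials, and let y, u, u_c, u₀ : ℝ → ℝ be infinitely differentiable. Denote by σ_a f the shifted function t ↦ f(t−a). Assume that for all t: (M(D)y)(t) = (Δ₀(D)u)(t) + (Δ₁(D)σ_h u)(t) and (F₀(D)(R₀(D)u + R₁(D)σ_h u))(t) = (T(D)u_c)(t) − (S₀(D)y)(t) − (S₁(D)σ_h y)(t) + (L(D)u₀)(t). Then for all t: ((F₀MR₀ + Δ₀S₀)(D)y)(t) + ((F₀MR₁ + Δ₀S₁ + Δ₁S₀)(D)σ_h y)(t) + ((Δ₁S₁)(D)σ_{2h} y)(t) = ((TΔ₀)(D)u_c)(t) + ((TΔ₁)(D)σ_h u_c)(t) + ((LΔ₀)(D)u₀)(t) + ((LΔ₁)(D)σ_h u₀)(t). -/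
open Polynomial

/-- The time-shift operator `σ_a`. -/
def shift (a : ℝ) (f : ℝ → ℝ) : ℝ → ℝ := fun t => f (t - a)

open ContDiff

private lemma smooth_nat {f : ℝ → ℝ} (hf : ContDiff ℝ ∞ f) (n : ℕ) : ContDiff ℝ n f :=
  hf.of_le (by exact_mod_cast le_top)

private lemma smooth_iter {f : ℝ → ℝ} (hf : ContDiff ℝ ∞ f) (n : ℕ) :
    ContDiff ℝ ∞ (iteratedDeriv n f) := by
  rw [iteratedDeriv_eq_iterate]; exact hf.iterate_deriv n

private lemma smooth_shift (a : ℝ) {f : ℝ → ℝ} (hf : ContDiff ℝ ∞ f) :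
    ContDiff ℝ ∞ (shift a f) :=
  hf.comp (contDiff_id.sub contDiff_const)

private lemma iter_fun_add {f g : ℝ → ℝ} (hf : ContDiff ℝ ∞ f) (hg : ContDiff ℝ ∞ g)
    (n : ℕ) (t : ℝ) :
    iteratedDeriv n (fun s => f s + g s) t = iteratedDeriv n f t + iteratedDeriv n g t := by
  have := iteratedDerivWithin_add (Set.mem_univ t) uniqueDiffOn_univ
    (smooth_nat hf n).contDiffWithinAt (smooth_nat hg n).contDiffWithinAt
  simpa [iteratedDerivWithin_univ, Pi.add_def] using this

private lemma iter_fun_const_mul {f : ℝ → ℝ} (hf : ContDiff ℝ ∞ f) (c : ℝ) (n : ℕ) (t : ℝ) :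
    iteratedDeriv n (fun s => c * f s) t = c * iteratedDeriv n f t := by
  have := iteratedDerivWithin_const_mul (Set.mem_univ t) uniqueDiffOn_univ c
    (smooth_nat hf n).contDiffWithinAt
  simpa [iteratedDerivWithin_univ] using this

private lemma iter_zero_fun (n : ℕ) : iteratedDeriv n (fun _ : ℝ => (0 : ℝ)) = fun _ => 0 := by
  induction n with
  | zero => rfl
  | succ n ih => rw [iteratedDeriv_succ, ih]; funext t; simp

private lemma iter_fun_sum {ι : Type*} [DecidableEq ι] (n : ℕ) (t : ℝ) (g : ι → ℝ → ℝ) :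
    ∀ s : Finset ι, (∀ i ∈ s, ContDiff ℝ ∞ (g i)) →
      iteratedDeriv n (fun x => ∑ i ∈ s, g i x) t = ∑ i ∈ s, iteratedDeriv n (g i) t := by
  intro s
  induction s using Finset.induction_on with
  | empty => intro _; simp [iter_zero_fun]
  | @insert a s ha ih =>
    intro hg
    have hg' : ∀ i ∈ s, ContDiff ℝ ∞ (g i) := fun i hi => hg i (Finset.mem_insert_of_mem hi)
    have hsum : ContDiff ℝ ∞ (fun x => ∑ i ∈ s, g i x) := ContDiff.sum fun i hi => hg' i hi
    have e : (fun x => ∑ i ∈ insert a s, g i x) = fun x => g a x + ∑ i ∈ s, g i x := by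
      funext x; rw [Finset.sum_insert ha]
    rw [e, iter_fun_add (hg a (Finset.mem_insert_self a s)) hsum, ih hg',
      Finset.sum_insert ha]

private lemma iter_iter (n i : ℕ) (f : ℝ → ℝ) :
    iteratedDeriv n (iteratedDeriv i f) = iteratedDeriv (n + i) f := by
  simp only [iteratedDeriv_eq_iterate]
  exact (Function.iterate_add_apply deriv n i f).symm

private lemma polyD_def (p : Polynomial ℝ) (f : ℝ → ℝ) (t : ℝ) :
    polyD p f t = ∑ i ∈ Finset.range (p.natDegree + 1), p.coeff i * iteratedDeriv i f t := rfl

private lemma polyD_eq_sum (p : Polynomial ℝ) (f : ℝ → ℝ) {N : ℕ} (hN : p.natDegree < N)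
    (t : ℝ) :
    polyD p f t = ∑ i ∈ Finset.range N, p.coeff i * iteratedDeriv i f t := by
  rw [polyD_def]
  refine Finset.sum_subset (Finset.range_subset_range.2 hN) ?_
  intro i _ hni
  simp only [Finset.mem_range, not_lt] at hni
  rw [p.coeff_eq_zero_of_natDegree_lt (by omega), zero_mul]

private lemma polyD_smooth (p : Polynomial ℝ) {f : ℝ → ℝ} (hf : ContDiff ℝ ∞ f) :
    ContDiff ℝ ∞ (polyD p f) := by
  unfold polyD
  exact ContDiff.sum fun i _ => contDiff_const.mul (smooth_iter hf i)

private lemma polyD_padd (p q : Polynomial ℝ) (f : ℝ → ℝ) (t : ℝ) :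
    polyD (p + q) f t = polyD p f t + polyD q f t := by
  set N := max (max p.natDegree q.natDegree) (p + q).natDegree + 1 with hN
  have h1 : p.natDegree < N := by omega
  have h2 : q.natDegree < N := by omega
  have h3 : (p + q).natDegree < N := by omega
  rw [polyD_eq_sum p f h1 t, polyD_eq_sum q f h2 t, polyD_eq_sum (p + q) f h3 t,
    ← Finset.sum_add_distrib]
  exact Finset.sum_congr rfl fun i _ => by rw [Polynomial.coeff_add, add_mul]

private lemma polyD_fun_add (p : Polynomial ℝ) {f g : ℝ → ℝ}
    (hf : ContDiff ℝ ∞ f) (hg : ContDiff ℝ ∞ g) (t : ℝ) :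
    polyD p (fun s => f s + g s) t = polyD p f t + polyD p g t := by
  simp only [polyD_def, ← Finset.sum_add_distrib]
  exact Finset.sum_congr rfl fun i _ => by rw [iter_fun_add hf hg, mul_add]

private lemma polyD_fun_neg (p : Polynomial ℝ) (f : ℝ → ℝ) (t : ℝ) :
    polyD p (fun s => -f s) t = -polyD p f t := by
  simp [polyD_def, iteratedDeriv_neg, mul_neg]

private lemma polyD_fun_sub (p : Polynomial ℝ) {f g : ℝ → ℝ}
    (hf : ContDiff ℝ ∞ f) (hg : ContDiff ℝ ∞ g) (t : ℝ) :
    polyD p (fun s => f s - g s) t = polyD p f t - polyD p g t := by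
  have e : (fun s => f s - g s) = fun s => f s + -g s := by funext s; ring
  rw [e, polyD_fun_add p hf hg.neg t, polyD_fun_neg, sub_eq_add_neg]

private lemma polyD_shift (p : Polynomial ℝ) (f : ℝ → ℝ) (a t : ℝ) :
    polyD p (shift a f) t = polyD p f (t - a) := by
  simp only [polyD_def]
  refine Finset.sum_congr rfl fun i _ => ?_
  have e : shift a f = fun z => f (z + -a) := by
    funext z; simp [shift, sub_eq_add_neg]
  rw [e, iteratedDeriv_comp_add_const, sub_eq_add_neg]

private lemma shift_shift (a b : ℝ) (f : ℝ → ℝ) : shift a (shift b f) = shift (a + b) f := by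
  funext t
  simp [shift, sub_sub]

private lemma polyD_monomial (n : ℕ) (a : ℝ) (g : ℝ → ℝ) (t : ℝ) :
    polyD (Polynomial.monomial n a) g t = a * iteratedDeriv n g t := by
  rw [polyD_eq_sum _ g (Nat.lt_succ_of_le (Polynomial.natDegree_monomial_le a)) t]
  simp [Polynomial.coeff_monomial, ite_mul]

private lemma polyD_monomial_mul (n : ℕ) (a : ℝ) (q : Polynomial ℝ) {f : ℝ → ℝ}
    (hf : ContDiff ℝ ∞ f) (t : ℝ) :
    polyD (Polynomial.monomial n a * q) f t = a * iteratedDeriv n (polyD q f) t := by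
  have hdeg : (Polynomial.monomial n a * q).natDegree < n + (q.natDegree + 1) := by
    have h1 := Polynomial.natDegree_mul_le (p := Polynomial.monomial n a) (q := q)
    have h2 := Polynomial.natDegree_monomial_le a (m := n)
    omega
  have hco : ∀ k, (Polynomial.monomial n a * q).coeff k
      = if n ≤ k then a * q.coeff (k - n) else 0 := by
    intro k
    have e : Polynomial.monomial n a * q = Polynomial.C a * (q * Polynomial.X ^ n) := by
      rw [← Polynomial.C_mul_X_pow_eq_monomial]; ring
    rw [e, Polynomial.coeff_C_mul, Polynomial.coeff_mul_X_pow']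
    split <;> simp
  rw [polyD_eq_sum _ f hdeg t, Finset.sum_range_add]
  have hz : ∀ i ∈ Finset.range n,
      (Polynomial.monomial n a * q).coeff i * iteratedDeriv i f t = 0 := by
    intro i hi
    simp only [Finset.mem_range] at hi
    rw [hco i, if_neg (by omega), zero_mul]
  rw [Finset.sum_eq_zero hz, zero_add]
  -- RHS
  have hR : iteratedDeriv n (polyD q f) t
      = ∑ i ∈ Finset.range (q.natDegree + 1), q.coeff i * iteratedDeriv (n + i) f t := by
    have e : polyD q f
        = fun x => ∑ i ∈ Finset.range (q.natDegree + 1),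
            (fun j (x : ℝ) => q.coeff j * iteratedDeriv j f x) i x := rfl
    rw [e, iter_fun_sum n t _ _
      (fun i _ => contDiff_const.mul (smooth_iter hf i))]
    exact Finset.sum_congr rfl fun i _ => by
      rw [iter_fun_const_mul (smooth_iter hf i), iter_iter]
  rw [hR, Finset.mul_sum]
  refine Finset.sum_congr rfl fun i _ => ?_
  rw [hco (n + i), if_pos (by omega)]
  have : n + i - n = i := by omega
  rw [this]; ring

private lemma polyD_mul (p q : Polynomial ℝ) {f : ℝ → ℝ} (hf : ContDiff ℝ ∞ f) (t : ℝ) :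
    polyD (p * q) f t = polyD p (polyD q f) t := by
  induction p using Polynomial.induction_on' with
  | add r s hr hs => rw [add_mul, polyD_padd, polyD_padd, hr, hs]
  | monomial n a => rw [polyD_monomial_mul n a q hf t, polyD_monomial]

private lemma applyPoly2 (P : Polynomial ℝ) {a b c : ℝ → ℝ}
    (hb : ContDiff ℝ ∞ b) (hc : ContDiff ℝ ∞ c)
    (H : ∀ t, a t = b t + c t) (t : ℝ) :
    polyD P a t = polyD P b t + polyD P c t := by
  have ha : a = fun s => b s + c s := funext H
  rw [ha, polyD_fun_add P hb hc]

private lemma applyPoly6 (P : Polynomial ℝ) {a b c d e g : ℝ → ℝ}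
    (ha : ContDiff ℝ ∞ a) (hb : ContDiff ℝ ∞ b) (hc : ContDiff ℝ ∞ c)
    (hd : ContDiff ℝ ∞ d) (he : ContDiff ℝ ∞ e) (hg : ContDiff ℝ ∞ g)
    (H : ∀ t, a t + b t = c t - d t - e t + g t) (t : ℝ) :
    polyD P a t + polyD P b t
      = polyD P c t - polyD P d t - polyD P e t + polyD P g t := by
  have hfun : (fun s => a s + b s) = fun s => c s - d s - e s + g s := funext H
  rw [← polyD_fun_add P ha hb, hfun, polyD_fun_add P ((hc.sub hd).sub he) hg,
    polyD_fun_sub P (hc.sub hd) he, polyD_fun_sub P hc hd]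

/-- The closed-loop equation (19)–(20) obtained by combining the plant input–output
equation (5) with the pole-placement control law (18) (inside Theorem 3). -/
theorem closed_loop_equation
    (h : ℝ) (hh : 0 < h)
    (M Δ₀ Δ₁ F₀ R₀ R₁ S₀ S₁ T L : Polynomial ℝ)
    (y u u_c u₀ : ℝ → ℝ)
    (hy : ContDiff ℝ (⊤ : ℕ∞) y) (hu : ContDiff ℝ (⊤ : ℕ∞) u)
    (huc : ContDiff ℝ (⊤ : ℕ∞) u_c) (hu₀ : ContDiff ℝ (⊤ : ℕ∞) u₀)
    (hplant : ∀ t : ℝ, polyD M y t = polyD Δ₀ u t + polyD Δ₁ (shift h u) t)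
    (hctrl : ∀ t : ℝ,
        polyD F₀ (fun s => polyD R₀ u s + polyD R₁ (shift h u) s) t
          = polyD T u_c t - polyD S₀ y t - polyD S₁ (shift h y) t + polyD L u₀ t) :
    ∀ t : ℝ,
      polyD (F₀ * M * R₀ + Δ₀ * S₀) y t
        + polyD (F₀ * M * R₁ + Δ₀ * S₁ + Δ₁ * S₀) (shift h y) t
        + polyD (Δ₁ * S₁) (shift (2 * h) y) t
      = polyD (T * Δ₀) u_c t + polyD (T * Δ₁) (shift h u_c) t
        + polyD (L * Δ₀) u₀ t + polyD (L * Δ₁) (shift h u₀) t := by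
  intro t
  have hy' : ContDiff ℝ ∞ y := hy.of_le (by simp)
  have hu' : ContDiff ℝ ∞ u := hu.of_le (by simp)
  have huc' : ContDiff ℝ ∞ u_c := huc.of_le (by simp)
  have hu0' : ContDiff ℝ ∞ u₀ := hu₀.of_le (by simp)
  have hσu : ContDiff ℝ ∞ (shift h u) := smooth_shift h hu'
  have hσy : ContDiff ℝ ∞ (shift h y) := smooth_shift h hy'
  have hσuc : ContDiff ℝ ∞ (shift h u_c) := smooth_shift h huc'
  have hσu0 : ContDiff ℝ ∞ (shift h u₀) := smooth_shift h hu0'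
  have e2u : shift h (shift h u) = shift (2 * h) u := by rw [shift_shift, two_mul]
  have e2y : shift h (shift h y) = shift (2 * h) y := by rw [shift_shift, two_mul]
  have hσ2u : ContDiff ℝ ∞ (shift (2 * h) u) := smooth_shift _ hu'
  have hσ2y : ContDiff ℝ ∞ (shift (2 * h) y) := smooth_shift _ hy'
  -- flattened control law
  have hctrl' : ∀ s, polyD (F₀ * R₀) u s + polyD (F₀ * R₁) (shift h u) s
      = polyD T u_c s - polyD S₀ y s - polyD S₁ (shift h y) s + polyD L u₀ s := by
    intro s
    rw [polyD_mul F₀ R₀ hu' s, polyD_mul F₀ R₁ hσu s,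
      ← polyD_fun_add F₀ (polyD_smooth R₀ hu') (polyD_smooth R₁ hσu) s]
    exact hctrl s
  -- shifted flattened control law
  have hctrlS : ∀ s, polyD (F₀ * R₀) (shift h u) s + polyD (F₀ * R₁) (shift (2 * h) u) s
      = polyD T (shift h u_c) s - polyD S₀ (shift h y) s - polyD S₁ (shift (2 * h) y) s
        + polyD L (shift h u₀) s := by
    intro s
    have hc := hctrl' (s - h)
    simp only [← polyD_shift] at hc
    rw [e2u, e2y] at hc
    exact hc
  -- shifted plant
  have hplantS : ∀ s, polyD M (shift h y) s
      = polyD Δ₀ (shift h u) s + polyD Δ₁ (shift (2 * h) u) s := by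
    intro s
    have hp := hplant (s - h)
    simp only [← polyD_shift] at hp
    rw [e2u] at hp
    exact hp
  -- E1 : control law multiplied by Δ₀
  have E1 : ∀ s, polyD (F₀ * Δ₀ * R₀) u s + polyD (F₀ * Δ₀ * R₁) (shift h u) s
      = polyD (T * Δ₀) u_c s - polyD (Δ₀ * S₀) y s - polyD (Δ₀ * S₁) (shift h y) s
        + polyD (L * Δ₀) u₀ s := by
    intro s
    have hA := applyPoly6 Δ₀ (polyD_smooth _ hu') (polyD_smooth _ hσu)
      (polyD_smooth _ huc') (polyD_smooth _ hy') (polyD_smooth _ hσy)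
      (polyD_smooth _ hu0') hctrl' s
    rw [← polyD_mul Δ₀ (F₀ * R₀) hu' s, ← polyD_mul Δ₀ (F₀ * R₁) hσu s,
      ← polyD_mul Δ₀ T huc' s, ← polyD_mul Δ₀ S₀ hy' s, ← polyD_mul Δ₀ S₁ hσy s,
      ← polyD_mul Δ₀ L hu0' s] at hA
    rw [show Δ₀ * (F₀ * R₀) = F₀ * Δ₀ * R₀ from by ring,
      show Δ₀ * (F₀ * R₁) = F₀ * Δ₀ * R₁ from by ring,
      show Δ₀ * T = T * Δ₀ from by ring,
      show Δ₀ * L = L * Δ₀ from by ring] at hA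
    exact hA
  -- E2 : shifted control law multiplied by Δ₁
  have E2 : ∀ s, polyD (F₀ * Δ₁ * R₀) (shift h u) s + polyD (F₀ * Δ₁ * R₁) (shift (2 * h) u) s
      = polyD (T * Δ₁) (shift h u_c) s - polyD (Δ₁ * S₀) (shift h y) s
        - polyD (Δ₁ * S₁) (shift (2 * h) y) s + polyD (L * Δ₁) (shift h u₀) s := by
    intro s
    have hA := applyPoly6 Δ₁ (polyD_smooth _ hσu) (polyD_smooth _ hσ2u)
      (polyD_smooth _ hσuc) (polyD_smooth _ hσy) (polyD_smooth _ hσ2y)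
      (polyD_smooth _ hσu0) hctrlS s
    rw [← polyD_mul Δ₁ (F₀ * R₀) hσu s, ← polyD_mul Δ₁ (F₀ * R₁) hσ2u s,
      ← polyD_mul Δ₁ T hσuc s, ← polyD_mul Δ₁ S₀ hσy s, ← polyD_mul Δ₁ S₁ hσ2y s,
      ← polyD_mul Δ₁ L hσu0 s] at hA
    rw [show Δ₁ * (F₀ * R₀) = F₀ * Δ₁ * R₀ from by ring,
      show Δ₁ * (F₀ * R₁) = F₀ * Δ₁ * R₁ from by ring,
      show Δ₁ * T = T * Δ₁ from by ring,
      show Δ₁ * L = L * Δ₁ from by ring] at hA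
    exact hA
  -- E3 : plant multiplied by F₀ R₀
  have E3 : polyD (F₀ * M * R₀) y t
      = polyD (F₀ * Δ₀ * R₀) u t + polyD (F₀ * Δ₁ * R₀) (shift h u) t := by
    have hA := applyPoly2 (F₀ * R₀) (polyD_smooth _ hu') (polyD_smooth _ hσu) hplant t
    rw [← polyD_mul (F₀ * R₀) M hy' t, ← polyD_mul (F₀ * R₀) Δ₀ hu' t,
      ← polyD_mul (F₀ * R₀) Δ₁ hσu t] at hA
    rw [show F₀ * R₀ * M = F₀ * M * R₀ from by ring,
      show F₀ * R₀ * Δ₀ = F₀ * Δ₀ * R₀ from by ring,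
      show F₀ * R₀ * Δ₁ = F₀ * Δ₁ * R₀ from by ring] at hA
    exact hA
  -- E4 : shifted plant multiplied by F₀ R₁
  have E4 : polyD (F₀ * M * R₁) (shift h y) t
      = polyD (F₀ * Δ₀ * R₁) (shift h u) t + polyD (F₀ * Δ₁ * R₁) (shift (2 * h) u) t := by
    have hA := applyPoly2 (F₀ * R₁) (polyD_smooth _ hσu) (polyD_smooth _ hσ2u) hplantS t
    rw [← polyD_mul (F₀ * R₁) M hσy t, ← polyD_mul (F₀ * R₁) Δ₀ hσu t,
      ← polyD_mul (F₀ * R₁) Δ₁ hσ2u t] at hA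
    rw [show F₀ * R₁ * M = F₀ * M * R₁ from by ring,
      show F₀ * R₁ * Δ₀ = F₀ * Δ₀ * R₁ from by ring,
      show F₀ * R₁ * Δ₁ = F₀ * Δ₁ * R₁ from by ring] at hA
    exact hA
  simp only [polyD_padd]
  linarith [E1 t, E2 t, E3, E4]
end

section
/- Let M₀, M₁, P be real polynomials with deg M₁ < deg M₀ and deg P < deg M₀, and let h > 0, v₁ > 0. Define F : ℂ → ℂ by F(s) = M₀(s) + M₁(s)·exp(−h·s). Assume F(s) ≠ 0 for every s ∈ ℂ with Re s ≥ −v₁, and that sup over s with Re s = −v₁ of |P(s)·exp(−2h·s)| / |F(s)| is strictly less than 1. Then M₀(s) + M₁(s)·exp(−h·s) + P(s)·exp(−2h·s) ≠ 0 for every s ∈ ℂ with Re s ≥ −v₁. -/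
open Polynomial Complex

open Filter Bornology Asymptotics Set Topology

/-! The ratio `g = P(s) e^{-2hs} / F(s)` is holomorphic on the closed half-plane `Re s ≥ -v₁`,
where `F` has no zeros. There the exponentials are bounded (as `h ≥ 0`), so the degree conditions
give `g → 0` at infinity. By Phragmén–Lindelöf, `|g|` is bounded on the half-plane by its
supremum on the boundary line, which is `< 1`; but a zero of `F + P e^{-2hs}` is a point where
`g = -1`. -/

theorem PhragmenLindelof.half_plane_of_tendsto_zero {E : Type*} [NormedAddCommGroup E]
    [NormedSpace ℂ E] {f : ℂ → E} {a C : ℝ} (hd : DiffContOnCl ℂ f {z | a < z.re})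
    (hlim : Tendsto f (cobounded ℂ ⊓ 𝓟 {z | a < z.re}) (𝓝 0))
    (hline : ∀ z : ℂ, z.re = a → ‖f z‖ ≤ C) {z : ℂ} (hz : a ≤ z.re) : ‖f z‖ ≤ C := by
  have hshift : MapsTo (· + (a : ℂ)) {w | 0 < w.re} {z | a < z.re} := fun w hw => by
    simp_all
  have hG : Tendsto (f ∘ (· + (a : ℂ))) (cobounded ℂ ⊓ 𝓟 {w | 0 < w.re}) (𝓝 0) :=
    hlim.comp ((tendsto_add_const_cobounded _).inf hshift.tendsto)
  have hreal : Tendsto ((↑) : ℝ → ℂ) atTop (cobounded ℂ ⊓ 𝓟 {w | 0 < w.re}) :=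
    tendsto_inf.2 ⟨RCLike.tendsto_ofReal_atTop_cobounded ℂ,
      tendsto_principal.2 <| (eventually_gt_atTop 0).mono fun x hx => by simpa using hx⟩
  simpa using PhragmenLindelof.right_half_plane_of_tendsto_zero_on_real
    (hd.comp (differentiable_id.add_const _).diffContOnCl hshift)
    ⟨1, one_lt_two, 0, by simpa using hG.isBigO_one ℝ⟩ (hG.comp hreal)
    (fun x => hline _ (by simp)) (z := z - a) (by simpa using hz)

theorem bddAbove_norm_image_of_tendsto_zero {α E : Type*} [PseudoMetricSpace α] [ProperSpace α]
    [SeminormedAddGroup E] {f : α → E} {S : Set α} (hS : IsClosed S) (hf : ContinuousOn f S)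
    (hlim : Tendsto f (cobounded α ⊓ 𝓟 S) (𝓝 0)) : BddAbove ((‖f ·‖) '' S) := by
  have hsmall : ∀ᶠ x in cobounded α, x ∈ S → ‖f x‖ ≤ 1 := eventually_inf_principal.1 <|
    (tendsto_zero_iff_norm_tendsto_zero.1 hlim).eventually (ge_mem_nhds one_pos)
  set K := {x | x ∈ S → ‖f x‖ ≤ 1}ᶜ
  have hK : IsCompact (S ∩ closure K) :=
    (isBounded_compl_iff.2 hsmall).isCompact_closure.inter_left hS
  obtain ⟨B, hB⟩ := hK.bddAbove_image (hf.norm.mono inter_subset_left)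
  refine ⟨max 1 B, ?_⟩
  rintro _ ⟨x, hxS, rfl⟩
  by_cases hx : x ∈ K
  · exact (hB ⟨x, ⟨hxS, subset_closure hx⟩, rfl⟩).trans (le_max_right _ _)
  · exact (not_not.1 hx hxS).trans (le_max_left _ _)

theorem isBigO_cexp_neg_mul_one {c : ℝ} (hc : 0 ≤ c) (a : ℝ) :
    (fun z : ℂ => cexp (-c * z)) =O[𝓟 {z | a ≤ z.re}] (fun _ => (1 : ℂ)) := by
  refine IsBigO.of_bound (Real.exp (-c * a)) (eventually_principal.2 fun z hz => ?_)
  rw [norm_exp, norm_one, mul_one, Real.exp_le_exp]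
  simpa using mul_le_mul_of_nonneg_left (show a ≤ z.re from hz) hc

theorem tendsto_div_quasipolynomial_of_degree_lt {p q₀ q₁ : ℂ[X]}
    (hp : p.degree < q₀.degree) (hq₁ : q₁.degree < q₀.degree) {c₁ c₂ : ℝ}
    (hc₁ : 0 ≤ c₁) (hc₂ : 0 ≤ c₂) (a : ℝ) :
    Tendsto (fun z => p.eval z * cexp (-c₂ * z) / (q₀.eval z + q₁.eval z * cexp (-c₁ * z)))
      (cobounded ℂ ⊓ 𝓟 {z | a ≤ z.re}) (𝓝 0) := by
  have hN : (fun z => p.eval z * cexp (-c₂ * z)) =o[cobounded ℂ ⊓ 𝓟 {z | a ≤ z.re}] q₀.eval := by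
    simpa using ((isLittleO_cobounded_of_degree_lt hp).mono inf_le_left).mul_isBigO
      ((isBigO_cexp_neg_mul_one hc₂ a).mono inf_le_right)
  have hF : q₀.eval =O[cobounded ℂ ⊓ 𝓟 {z | a ≤ z.re}]
      (fun z => q₀.eval z + q₁.eval z * cexp (-c₁ * z)) := by
    have : (fun z => q₁.eval z * cexp (-c₁ * z)) =o[cobounded ℂ ⊓ 𝓟 {z | a ≤ z.re}] q₀.eval := by
      simpa using ((isLittleO_cobounded_of_degree_lt hq₁).mono inf_le_left).mul_isBigO
        ((isBigO_cexp_neg_mul_one hc₁ a).mono inf_le_right)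
    exact this.right_isBigO_add'
  exact (hN.trans_isBigO hF).tendsto_div_nhds_zero

theorem Polynomial.differentiable_aeval_mul_cexp {R : Type*} [CommSemiring R] [Algebra R ℂ]
    (p : R[X]) (c : ℂ) : Differentiable ℂ fun z => aeval z p * cexp (c * z) :=
  p.differentiable_aeval.mul (differentiable_id.const_mul c).cexp

theorem quasipolynomial_zero_exclusion_general
    (M₀ M₁ P : Polynomial ℝ)
    (hdeg₁ : M₁.degree < M₀.degree) (hdegP : P.degree < M₀.degree)
    (h v₁ : ℝ) (hh : 0 < h)
    (F : ℂ → ℂ)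
    (hF : ∀ s : ℂ, F s = aeval s M₀ + aeval s M₁ * Complex.exp (-h * s))
    (hFne : ∀ s : ℂ, -v₁ ≤ s.re → F s ≠ 0)
    (hsup : sSup ((fun s : ℂ =>
        ‖aeval s P * Complex.exp (-(2 * h) * s)‖ / ‖F s‖) ''
        {s : ℂ | s.re = -v₁}) < 1) :
    ∀ s : ℂ, -v₁ ≤ s.re →
      aeval s M₀ + aeval s M₁ * Complex.exp (-h * s)
        + aeval s P * Complex.exp (-(2 * h) * s) ≠ 0 := by
  simp only [hF] at hFne hsup
  set g : ℂ → ℂ := fun s =>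
    aeval s P * cexp (-(2 * h) * s) / (aeval s M₀ + aeval s M₁ * cexp (-h * s))
  simp_rw [← norm_div] at hsup
  have hdiff : DifferentiableOn ℂ g {z | -v₁ ≤ z.re} := by
    intro z hz
    exact ((P.differentiable_aeval_mul_cexp _ z).div ((M₀.differentiable_aeval z).add
      (M₁.differentiable_aeval_mul_cexp _ z)) (hFne z hz)).differentiableWithinAt
  have hlim : Tendsto g (cobounded ℂ ⊓ 𝓟 {z | -v₁ ≤ z.re}) (𝓝 0) := by
    have := tendsto_div_quasipolynomial_of_degree_lt (p := P.map (algebraMap ℝ ℂ))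
      (q₀ := M₀.map (algebraMap ℝ ℂ)) (q₁ := M₁.map (algebraMap ℝ ℂ))
      (by simpa only [degree_map] using hdegP) (by simpa only [degree_map] using hdeg₁)
      hh.le (by positivity : (0 : ℝ) ≤ 2 * h) (-v₁)
    simpa [g, aeval_def, eval_map] using this
  have hbdd : BddAbove ((‖g ·‖) '' {z | z.re = -v₁}) :=
    bddAbove_norm_image_of_tendsto_zero (isClosed_eq continuous_re continuous_const)
      (hdiff.continuousOn.mono fun z hz => le_of_eq hz.symm)
      (hlim.mono_left (inf_le_inf_left _ (principal_mono.2 fun z hz => le_of_eq hz.symm)))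
  intro s hs hzero
  have hgs : ‖g s‖ ≤ sSup ((‖g ·‖) '' {z | z.re = -v₁}) :=
    PhragmenLindelof.half_plane_of_tendsto_zero
      (by rw [← closure_setOfPred_lt_re] at hdiff; exact hdiff.diffContOnCl)
      (hlim.mono_left (inf_le_inf_left _ (principal_mono.2 fun z (hz : -v₁ < z.re) => hz.le)))
      (fun z hz => le_csSup hbdd ⟨z, hz, rfl⟩) hs
  have hgs_one : ‖g s‖ = 1 := by
    rw [show g s = _ / _ from rfl, eq_neg_of_add_eq_zero_right hzero, neg_div,
      div_self (hFne s hs), norm_neg, norm_one]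
  exact (hgs_one ▸ hgs).not_gt hsup

/-- Rouché-type zero-exclusion for the perturbed quasi-polynomial, establishing the
closed-loop stability condition of Theorem 3(i) (inequality (A.9)). -/
theorem quasipolynomial_zero_exclusion
    (M₀ M₁ P : Polynomial ℝ)
    (hdeg₁ : M₁.degree < M₀.degree) (hdegP : P.degree < M₀.degree)
    (h v₁ : ℝ) (hh : 0 < h) (hv₁ : 0 < v₁)
    (F : ℂ → ℂ)
    (hF : ∀ s : ℂ, F s = aeval s M₀ + aeval s M₁ * Complex.exp (-h * s))
    (hFne : ∀ s : ℂ, -v₁ ≤ s.re → F s ≠ 0)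
    (hsup : sSup ((fun s : ℂ =>
        ‖aeval s P * Complex.exp (-(2 * h) * s)‖ / ‖F s‖) ''
        {s : ℂ | s.re = -v₁}) < 1) :
    ∀ s : ℂ, -v₁ ≤ s.re →
      aeval s M₀ + aeval s M₁ * Complex.exp (-h * s)
        + aeval s P * Complex.exp (-(2 * h) * s) ≠ 0 :=
  quasipolynomial_zero_exclusion_general M₀ M₁ P hdeg₁ hdegP h v₁ hh F hF hFne hsup
end

section
/- Let E, A be n×n real matrices with a Weierstrass decomposition (Q, P, n₁, n₂, W, N) in which N = 0 (the impulse-free case, index ℓ = 1). Let b, d, c ∈ ℝⁿ, h > 0, let u : ℝ → ℝ and v₀ : ℝ → ℝⁿ be continuous, and let x : ℝ → ℝⁿ be differentiable with E·ẋ(t) = A·x(t) + b·u(t) + d·u(t−h) + v₀(t) for all t ≥ 0 and y(t) = cᵀx(t). Split Qb = (α₁, α₂), Qd = (β₁, β₂), Q·v₀(t) = (η₁(t), η₂(t)) and Pᵀc = (γ₁, γ₂) with first components in ℝ^{n₁}, let z(t) = P⁻¹x(t) = (z₁(t), z₂(t)) and z₁₀ = z₁(0). Then for all t ≥ 0: y(t)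 = γ₁ᵀ·exp(tW)·(z₁₀ + ∫₀ᵗ exp(−τW)·(α₁·u(τ) + β₁·u(τ−h) + η₁(τ)) dτ) − γ₂ᵀ·(α₂·u(t) + β₂·u(t−h) + η₂(t)). -/
open Matrix intervalIntegral

/-!
In the coordinates `z = P⁻¹ x`, multiplying the system by `Q` brings it into Weierstrass form:
the slow part is the ODE `ż₁ = W z₁ + f₁`, and since `N = 0` the fast part is the algebraic
equation `0 = z₂ + f₂`. Variation of constants — `τ ↦ exp(-τW) z₁(τ)` has derivative
`exp(-τW) f₁(τ)` — solves the slow part, and `y = cᵀ P z = γ₁ᵀ z₁ + γ₂ᵀ z₂`.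
-/

section VariationOfConstants

attribute [local instance] Matrix.linftyOpNormedRing Matrix.linftyOpNormedAlgebra

variable {ι : Type*} [Fintype ι] [DecidableEq ι]

theorem HasDerivAt.matrix_mulVec {M : ℝ → Matrix ι ι ℝ} {v : ℝ → ι → ℝ}
    {M' : Matrix ι ι ℝ} {v' : ι → ℝ} {t : ℝ} (hM : HasDerivAt M M' t) (hv : HasDerivAt v v' t) :
    HasDerivAt (fun s => M s *ᵥ v s) (M' *ᵥ v t + M t *ᵥ v') t := by
  let B : Matrix ι ι ℝ →L[ℝ] (ι → ℝ) →L[ℝ] ι → ℝ :=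
    (LinearMap.toContinuousLinearMap.toLinearMap ∘ₗ mulVecBilin ℝ ℝ).toContinuousLinearMap
  have hBMv := (B.hasFDerivAt.comp_hasDerivAt t hM).clm_apply hv
  simp only [Function.comp_apply] at hBMv
  exact hBMv

theorem HasDerivAt.const_mulVec (M : Matrix ι ι ℝ) {v : ℝ → ι → ℝ} {v' : ι → ℝ} {t : ℝ}
    (hv : HasDerivAt v v' t) : HasDerivAt (fun s => M *ᵥ v s) (M *ᵥ v') t := by
  simpa only [zero_mulVec, zero_add] using (hasDerivAt_const t M).matrix_mulVec hv

theorem continuous_exp_smul_const (W : Matrix ι ι ℝ) :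
    Continuous fun τ : ℝ => NormedSpace.exp (τ • W) :=
  NormedSpace.exp_continuous.comp (continuous_id.smul continuous_const)

theorem exp_smul_mul_exp_neg_smul (W : Matrix ι ι ℝ) (t : ℝ) :
    NormedSpace.exp (t • W) * NormedSpace.exp (t • -W) = 1 := by
  rw [smul_neg, ← Matrix.exp_add_of_commute _ _ ((Commute.refl (t • W)).neg_right),
    add_neg_cancel, NormedSpace.exp_zero]

theorem eq_exp_smul_mulVec_of_hasDerivAt {W : Matrix ι ι ℝ} {z f : ℝ → ι → ℝ}
    (hf : Continuous f) (hz : ∀ s, HasDerivAt z (W *ᵥ z s + f s) s) (t : ℝ) :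
    z t = NormedSpace.exp (t • W) *ᵥ
      (z 0 + ∫ τ in (0:ℝ)..t, NormedSpace.exp (-(τ • W)) *ᵥ f τ) := by
  have hderiv : ∀ s, HasDerivAt (fun τ => NormedSpace.exp (τ • -W) *ᵥ z τ)
      (NormedSpace.exp (s • -W) *ᵥ f s) s := fun s => by
    have := (hasDerivAt_exp_smul_const (-W) s).matrix_mulVec (hz s)
    rwa [mulVec_add, ← mulVec_mulVec, neg_mulVec, mulVec_neg, neg_add_cancel_left] at this
  have hint : Continuous fun τ => NormedSpace.exp (τ • -W) *ᵥ f τ :=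
    (continuous_exp_smul_const (-W)).matrix_mulVec hf
  have hftc := integral_eq_sub_of_hasDerivAt (fun s _ => hderiv s) (hint.intervalIntegrable 0 t)
  simp only [← smul_neg, hftc, zero_smul, NormedSpace.exp_zero, one_mulVec, add_sub_cancel,
    mulVec_mulVec, exp_smul_mul_exp_neg_smul, one_mulVec]

end VariationOfConstants

section BlockCoordinates

variable {n₁ n₂ n : ℕ} (hn : n₁ + n₂ = n)

@[simp] theorem part1_add (v w : Fin n → ℝ) : part1 hn (v + w) = part1 hn v + part1 hn w := rfl

@[simp] theorem part2_add (v w : Fin n → ℝ) : part2 hn (v + w) = part2 hn v + part2 hn w := rfl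

@[simp] theorem part1_smul (a : ℝ) (v : Fin n → ℝ) : part1 hn (a • v) = a • part1 hn v := rfl

@[simp] theorem part2_smul (a : ℝ) (v : Fin n → ℝ) : part2 hn (a • v) = a • part2 hn v := rfl

theorem dotProduct_eq_part1_add_part2 (v w : Fin n → ℝ) :
    v ⬝ᵥ w = part1 hn v ⬝ᵥ part1 hn w + part2 hn v ⬝ᵥ part2 hn w := by
  rw [dotProduct, ← (blockEquiv hn).symm.sum_comp, Fintype.sum_sum_type]
  rfl

theorem HasDerivAt.part1 {f : ℝ → Fin n → ℝ} {f' : Fin n → ℝ} {t : ℝ} (hf : HasDerivAt f f' t) :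
    HasDerivAt (fun s => part1 hn (f s)) (part1 hn f') t :=
  hasDerivAt_pi.2 fun _ => hasDerivAt_pi.1 hf _

@[fun_prop]
theorem Continuous.part1 {f : ℝ → Fin n → ℝ} (hf : Continuous f) :
    Continuous fun s => part1 hn (f s) :=
  continuous_pi fun _ => (continuous_apply _).comp hf

variable {M : Matrix (Fin n) (Fin n) ℝ}
    {A : Matrix (Fin n₁) (Fin n₁) ℝ} {B : Matrix (Fin n₁) (Fin n₂) ℝ}
    {C : Matrix (Fin n₂) (Fin n₁) ℝ} {D : Matrix (Fin n₂) (Fin n₂) ℝ}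

theorem mulVec_comp_blockEquiv_symm_of_reindex_eq_fromBlocks
    (hM : reindex (blockEquiv hn) (blockEquiv hn) M = fromBlocks A B C D) (v : Fin n → ℝ) :
    (M *ᵥ v) ∘ (blockEquiv hn).symm
      = Sum.elim (A *ᵥ part1 hn v + B *ᵥ part2 hn v) (C *ᵥ part1 hn v + D *ᵥ part2 hn v) := by
  calc (M *ᵥ v) ∘ (blockEquiv hn).symm = fromBlocks A B C D *ᵥ (v ∘ (blockEquiv hn).symm) := by
        rw [← hM, reindex_apply, submatrix_mulVec_equiv, Equiv.symm_symm, Function.comp_assoc,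
          Equiv.symm_comp_self, Function.comp_id]
    _ = _ := fromBlocks_mulVec A B C D _

theorem part1_mulVec_of_reindex_eq_fromBlocks
    (hM : reindex (blockEquiv hn) (blockEquiv hn) M = fromBlocks A B C D) (v : Fin n → ℝ) :
    part1 hn (M *ᵥ v) = A *ᵥ part1 hn v + B *ᵥ part2 hn v :=
  congrArg (· ∘ Sum.inl) (mulVec_comp_blockEquiv_symm_of_reindex_eq_fromBlocks hn hM v)

theorem part2_mulVec_of_reindex_eq_fromBlocks
    (hM : reindex (blockEquiv hn) (blockEquiv hn) M = fromBlocks A B C D) (v : Fin n → ℝ) :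
    part2 hn (M *ᵥ v) = C *ᵥ part1 hn v + D *ᵥ part2 hn v :=
  congrArg (· ∘ Sum.inr) (mulVec_comp_blockEquiv_symm_of_reindex_eq_fromBlocks hn hM v)

theorem slow_equation_of_weierstrass_form {E A : Matrix (Fin n) (Fin n) ℝ}
    {W : Matrix (Fin n₁) (Fin n₁) ℝ} {N : Matrix (Fin n₂) (Fin n₂) ℝ}
    (hE : reindex (blockEquiv hn) (blockEquiv hn) E = fromBlocks 1 0 0 N)
    (hA : reindex (blockEquiv hn) (blockEquiv hn) A = fromBlocks W 0 0 1)
    {ξ' ξ g : Fin n → ℝ} (h : E *ᵥ ξ' = A *ᵥ ξ + g) :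
    part1 hn ξ' = W *ᵥ part1 hn ξ + part1 hn g := by
  have h₁ := congrArg (part1 hn) h
  rwa [part1_add, part1_mulVec_of_reindex_eq_fromBlocks hn hE,
    part1_mulVec_of_reindex_eq_fromBlocks hn hA, one_mulVec, zero_mulVec, zero_mulVec, add_zero,
    add_zero] at h₁

theorem fast_equation_of_weierstrass_form {E A : Matrix (Fin n) (Fin n) ℝ}
    {W : Matrix (Fin n₁) (Fin n₁) ℝ} {N : Matrix (Fin n₂) (Fin n₂) ℝ}
    (hE : reindex (blockEquiv hn) (blockEquiv hn) E = fromBlocks 1 0 0 N)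
    (hA : reindex (blockEquiv hn) (blockEquiv hn) A = fromBlocks W 0 0 1)
    {ξ' ξ g : Fin n → ℝ} (h : E *ᵥ ξ' = A *ᵥ ξ + g) :
    N *ᵥ part2 hn ξ' = part2 hn ξ + part2 hn g := by
  have h₂ := congrArg (part2 hn) h
  rwa [part2_add, part2_mulVec_of_reindex_eq_fromBlocks hn hE,
    part2_mulVec_of_reindex_eq_fromBlocks hn hA, one_mulVec, zero_mulVec, zero_mulVec, zero_add,
    zero_add] at h₂

end BlockCoordinates

theorem mul_mul_mulVec_nonsing_inv_mulVec {R : Type*} [CommRing R] {m : Type*} [Fintype m]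
    [DecidableEq m] (Q M : Matrix m m R) {P : Matrix m m R} (hP : IsUnit P) (v : m → R) :
    (Q * M * P) *ᵥ (P⁻¹ *ᵥ v) = Q *ᵥ (M *ᵥ v) := by
  rw [mulVec_mulVec, mul_assoc, mul_nonsing_inv P ((isUnit_iff_isUnit_det P).mp hP), mul_one,
    mulVec_mulVec]

theorem output_trajectory_impulse_free_general
    (n n₁ n₂ : ℕ) (hn : n₁ + n₂ = n)
    (E A Q P : Matrix (Fin n) (Fin n) ℝ)
    (W : Matrix (Fin n₁) (Fin n₁) ℝ)
    (hP : IsUnit P)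
    (hE : Matrix.reindex (blockEquiv hn) (blockEquiv hn) (Q * E * P)
        = Matrix.fromBlocks 1 0 0 (0 : Matrix (Fin n₂) (Fin n₂) ℝ))
    (hA : Matrix.reindex (blockEquiv hn) (blockEquiv hn) (Q * A * P)
        = Matrix.fromBlocks W 0 0 1)
    (b d c : Fin n → ℝ) (h : ℝ)
    (u : ℝ → ℝ) (v₀ : ℝ → Fin n → ℝ) (hu : Continuous u) (hv₀ : Continuous v₀)
    (x : ℝ → Fin n → ℝ) (y : ℝ → ℝ)
    (hx : Differentiable ℝ x)
    (hsys : ∀ t : ℝ, E.mulVec (deriv x t)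
        = A.mulVec (x t) + u t • b + u (t - h) • d + v₀ t)
    (hy : ∀ t : ℝ, y t = c ⬝ᵥ x t)
    (z₁ : ℝ → Fin n₁ → ℝ) (z₂ : ℝ → Fin n₂ → ℝ)
    (hz₁ : ∀ t, z₁ t = part1 hn (P⁻¹.mulVec (x t)))
    (hz₂ : ∀ t, z₂ t = part2 hn (P⁻¹.mulVec (x t)))
    (z₁₀ : Fin n₁ → ℝ) (hz₁₀ : z₁₀ = z₁ 0)
    (α₁ : Fin n₁ → ℝ) (α₂ : Fin n₂ → ℝ)
    (hα₁ : α₁ = part1 hn (Q.mulVec b)) (hα₂ : α₂ = part2 hn (Q.mulVec b))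
    (β₁ : Fin n₁ → ℝ) (β₂ : Fin n₂ → ℝ)
    (hβ₁ : β₁ = part1 hn (Q.mulVec d)) (hβ₂ : β₂ = part2 hn (Q.mulVec d))
    (η₁ : ℝ → Fin n₁ → ℝ) (η₂ : ℝ → Fin n₂ → ℝ)
    (hη₁ : ∀ t, η₁ t = part1 hn (Q.mulVec (v₀ t)))
    (hη₂ : ∀ t, η₂ t = part2 hn (Q.mulVec (v₀ t)))
    (γ₁ : Fin n₁ → ℝ) (γ₂ : Fin n₂ → ℝ)
    (hγ₁ : γ₁ = part1 hn (Pᵀ.mulVec c)) (hγ₂ : γ₂ = part2 hn (Pᵀ.mulVec c)) :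
    ∀ t : ℝ, 0 ≤ t →
      y t = γ₁ ⬝ᵥ (NormedSpace.exp (t • W)).mulVec
              (z₁₀ + ∫ τ in (0:ℝ)..t, (NormedSpace.exp (-(τ • W))).mulVec
                (u τ • α₁ + u (τ - h) • β₁ + η₁ τ))
            - γ₂ ⬝ᵥ (u t • α₂ + u (t - h) • β₂ + η₂ t) := by
  intro t _
  have hPinv : P * P⁻¹ = 1 := mul_nonsing_inv P ((isUnit_iff_isUnit_det P).mp hP)
  have hreduced : ∀ s, (Q * E * P) *ᵥ (P⁻¹ *ᵥ deriv x s)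
      = (Q * A * P) *ᵥ (P⁻¹ *ᵥ x s) + Q *ᵥ (u s • b + u (s - h) • d + v₀ s) := fun s => by
    rw [mul_mul_mulVec_nonsing_inv_mulVec _ _ hP, mul_mul_mulVec_nonsing_inv_mulVec _ _ hP,
      hsys, ← mulVec_add, add_assoc, add_assoc, add_assoc]
  have hz₁_ode : ∀ s, HasDerivAt z₁ (W *ᵥ z₁ s + (u s • α₁ + u (s - h) • β₁ + η₁ s)) s := by
    intro s
    have hslow := slow_equation_of_weierstrass_form hn hE hA (hreduced s)
    simp only [mulVec_add, mulVec_smul, part1_add, part1_smul, ← hα₁, ← hβ₁, ← hη₁, ← hz₁]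
      at hslow
    rw [← hslow, funext hz₁]
    exact ((hx s).hasDerivAt.const_mulVec P⁻¹).part1 hn
  have hz₂_alg : ∀ s, z₂ s = -(u s • α₂ + u (s - h) • β₂ + η₂ s) := by
    intro s
    have hfast := fast_equation_of_weierstrass_form hn hE hA (hreduced s)
    simp only [mulVec_add, mulVec_smul, part2_add, part2_smul, ← hα₂, ← hβ₂, ← hη₂, ← hz₂,
      zero_mulVec] at hfast
    exact eq_neg_of_add_eq_zero_left hfast.symm
  have hforcing : Continuous fun s => u s • α₁ + u (s - h) • β₁ + η₁ s := by
    rw [funext hη₁]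
    fun_prop
  have hy_blocks : y t = γ₁ ⬝ᵥ z₁ t + γ₂ ⬝ᵥ z₂ t := by
    rw [hy, ← one_mulVec (x t), ← hPinv, ← mulVec_mulVec, dotProduct_mulVec, ← mulVec_transpose,
      dotProduct_eq_part1_add_part2 hn, hγ₁, hγ₂, hz₁, hz₂]
  rw [hy_blocks, eq_exp_smul_mulVec_of_hasDerivAt hforcing hz₁_ode t, hz₂_alg t, hz₁₀, dotProduct_neg,
    ← sub_eq_add_neg]

/-- Explicit output-trajectory formula of Theorem 2 in the impulse-free case `ℓ = 1`
(equations (13.a)–(13.b)): the fast equation is purely algebraic. -/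
theorem output_trajectory_impulse_free
    (n n₁ n₂ : ℕ) (hn : n₁ + n₂ = n)
    (E A Q P : Matrix (Fin n) (Fin n) ℝ)
    (W : Matrix (Fin n₁) (Fin n₁) ℝ)
    (hQ : IsUnit Q) (hP : IsUnit P)
    (hE : Matrix.reindex (blockEquiv hn) (blockEquiv hn) (Q * E * P)
        = Matrix.fromBlocks 1 0 0 (0 : Matrix (Fin n₂) (Fin n₂) ℝ))
    (hA : Matrix.reindex (blockEquiv hn) (blockEquiv hn) (Q * A * P)
        = Matrix.fromBlocks W 0 0 1)
    (b d c : Fin n → ℝ) (h : ℝ) (hh : 0 < h)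
    (u : ℝ → ℝ) (v₀ : ℝ → Fin n → ℝ) (hu : Continuous u) (hv₀ : Continuous v₀)
    (x : ℝ → Fin n → ℝ) (y : ℝ → ℝ)
    (hx : Differentiable ℝ x)
    (hsys : ∀ t : ℝ, E.mulVec (deriv x t)
        = A.mulVec (x t) + u t • b + u (t - h) • d + v₀ t)
    (hy : ∀ t : ℝ, y t = c ⬝ᵥ x t)
    (z₁ : ℝ → Fin n₁ → ℝ) (z₂ : ℝ → Fin n₂ → ℝ)
    (hz₁ : ∀ t, z₁ t = part1 hn (P⁻¹.mulVec (x t)))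
    (hz₂ : ∀ t, z₂ t = part2 hn (P⁻¹.mulVec (x t)))
    (z₁₀ : Fin n₁ → ℝ) (hz₁₀ : z₁₀ = z₁ 0)
    (α₁ : Fin n₁ → ℝ) (α₂ : Fin n₂ → ℝ)
    (hα₁ : α₁ = part1 hn (Q.mulVec b)) (hα₂ : α₂ = part2 hn (Q.mulVec b))
    (β₁ : Fin n₁ → ℝ) (β₂ : Fin n₂ → ℝ)
    (hβ₁ : β₁ = part1 hn (Q.mulVec d)) (hβ₂ : β₂ = part2 hn (Q.mulVec d))
    (η₁ : ℝ → Fin n₁ → ℝ) (η₂ : ℝ → Fin n₂ → ℝ)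
    (hη₁ : ∀ t, η₁ t = part1 hn (Q.mulVec (v₀ t)))
    (hη₂ : ∀ t, η₂ t = part2 hn (Q.mulVec (v₀ t)))
    (γ₁ : Fin n₁ → ℝ) (γ₂ : Fin n₂ → ℝ)
    (hγ₁ : γ₁ = part1 hn (Pᵀ.mulVec c)) (hγ₂ : γ₂ = part2 hn (Pᵀ.mulVec c)) :
    ∀ t : ℝ, 0 ≤ t →
      y t = γ₁ ⬝ᵥ (NormedSpace.exp (t • W)).mulVec
              (z₁₀ + ∫ τ in (0:ℝ)..t, (NormedSpace.exp (-(τ • W))).mulVec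
                (u τ • α₁ + u (τ - h) • β₁ + η₁ τ))
            - γ₂ ⬝ᵥ (u t • α₂ + u (t - h) • β₂ + η₂ t) :=
  output_trajectory_impulse_free_general n n₁ n₂ hn E A Q P W hP hE hA b d c h u v₀ hu hv₀ x y hx
    hsys hy z₁ z₂ hz₁ hz₂ z₁₀ hz₁₀ α₁ α₂ hα₁ hα₂ β₁ β₂ hβ₁ hβ₂ η₁ η₂ hη₁ hη₂ γ₁ γ₂ hγ₁ hγ₂
end
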